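/- arXiv:2212.12728 — 9 statements merged into one kernel-verified Lean document; each statement's English description precedes it below -/
import Mathlib

section
/- For all x ≤ y and x' ≤ y' in the ordered set \overline{[n]}, the value H((x,y)⊗(x',y')) := max{ θ_j((x,y)⊗(x',y')), θ'_j((x,y)⊗(x',y')), η_j((x,y)⊗(x',y')), η'_j((x,y)⊗(x',y')) : j ∈ {1,…,n} } equals H'((x,y)⊗(x',y')), where H'((x,y)⊗(x',y')) = χ(x≥x') + χ(y≥y') − χ(y ≥ y' > x ≥ x') if \bar{y'} ≠ x, and H'((x,y)⊗(x',y')) = χ(x>x') + χ(y>y') − χ(y > y' > x > x') if \bar{y'} = x. -/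
open Classical in
/-- `chi P` is 1 if `P` holds and 0 otherwise. -/
noncomputable def chi (P : Prop) : ℤ := if P then 1 else 0

/-- The involution `x ↦ 2n+1-x` on `{1,…,2n}` (the set `\overline{[n]}`). -/
def bar (n : ℕ) (x : ℤ) : ℤ := 2 * (n : ℤ) + 1 - x

/-- `θ_j((x,y) ⊗ (x',y'))`. -/
noncomputable def thetaJ (n : ℕ) (j x y x' y' : ℤ) : ℤ :=
  chi (bar n j < x) + chi (bar n j < y) - chi (bar n j < x') - chi (bar n j < y')

/-- `θ'_j((x,y) ⊗ (x',y'))`. -/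
noncomputable def thetaJ' (n : ℕ) (j x y x' y' : ℤ) : ℤ :=
  chi (x' < j) + chi (y' < j) - chi (x < j) - chi (y < j)

/-- `η_j((x,y) ⊗ (x',y'))`. -/
noncomputable def etaJ (n : ℕ) (j x y x' y' : ℤ) : ℤ :=
  chi (bar n j ≤ x) + chi (bar n j ≤ y) - chi (bar n j < x') - chi (bar n j < y')
    - chi (x = j) - chi (y = j)

/-- `η'_j((x,y) ⊗ (x',y'))`. -/
noncomputable def etaJ' (n : ℕ) (j x y x' y' : ℤ) : ℤ :=
  chi (x' ≤ j) + chi (y' ≤ j) - chi (x < j) - chi (y < j)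
    - chi (x' = bar n j) - chi (y' = bar n j)

/-- The Kang–Kashiwara–Misra energy
`H((x,y) ⊗ (x',y')) = max {θ_j, θ'_j, η_j, η'_j : j ∈ {1,…,n}}`. -/
noncomputable def Henergy (n : ℕ) (hn : 1 ≤ n) (x y x' y' : ℤ) : ℤ :=
  (Finset.Icc (1 : ℤ) (n : ℤ)).sup'
    (Finset.nonempty_Icc.mpr (by exact_mod_cast hn))
    (fun j => max (max (thetaJ n j x y x' y') (thetaJ' n j x y x' y'))
                  (max (etaJ n j x y x' y') (etaJ' n j x y x' y')))

/-- The simple formula `H'((x,y) ⊗ (x',y'))`. -/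
noncomputable def Hprime (n : ℕ) (x y x' y' : ℤ) : ℤ :=
  if bar n y' ≠ x then
    chi (x' ≤ x) + chi (y' ≤ y) - chi (y' ≤ y ∧ x < y' ∧ x' ≤ x)
  else
    chi (x' < x) + chi (y' < y) - chi (y' < y ∧ x < y' ∧ x' < x)


set_option maxHeartbeats 2000000 in
theorem aux_upper (n : ℕ) (hn : 2 ≤ n) (j x y x' y' : ℤ)
    (hx : 1 ≤ x) (hxy : x ≤ y) (hy : y ≤ 2 * (n : ℤ))
    (hx' : 1 ≤ x') (hxy' : x' ≤ y') (hy' : y' ≤ 2 * (n : ℤ))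
    (hj1 : 1 ≤ j) (hj2 : j ≤ (n:ℤ)) :
    max (max (thetaJ n j x y x' y') (thetaJ' n j x y x' y'))
        (max (etaJ n j x y x' y') (etaJ' n j x y x' y')) ≤ Hprime n x y x' y' := by
  have hn2 : (2:ℤ) ≤ n := by exact_mod_cast hn
  simp only [max_le_iff]
  refine ⟨⟨?_, ?_⟩, ?_, ?_⟩
  · simp only [thetaJ, Hprime, chi, bar]
    split_ifs <;> omega
  · simp only [thetaJ', Hprime, chi, bar]
    split_ifs <;> omega
  · simp only [etaJ, Hprime, chi, bar]
    split_ifs <;> omega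
  · simp only [etaJ', Hprime, chi, bar]
    split_ifs <;> omega

set_option maxHeartbeats 2000000 in
theorem aux_lower (n : ℕ) (hn : 2 ≤ n) (x y x' y' : ℤ)
    (hx : 1 ≤ x) (hxy : x ≤ y) (hy : y ≤ 2 * (n : ℤ))
    (hx' : 1 ≤ x') (hxy' : x' ≤ y') (hy' : y' ≤ 2 * (n : ℤ)) :
    ∃ j, 1 ≤ j ∧ j ≤ (n:ℤ) ∧ Hprime n x y x' y' ≤
      max (max (thetaJ n j x y x' y') (thetaJ' n j x y x' y'))
          (max (etaJ n j x y x' y') (etaJ' n j x y x' y')) := by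
  have hn2 : (2:ℤ) ≤ n := by exact_mod_cast hn
  by_cases heq : bar n y' = x
  · by_cases hA : x' < x
    · by_cases hB : y' < y
      · by_cases hC : x < y'
        · refine ⟨max 1 (min x' (n:ℤ)), by omega, by omega,
            le_trans ?_ ((le_max_right _ _).trans (le_max_right _ _))⟩
          simp only [etaJ', Hprime, chi, bar] at *
          split_ifs <;> omega
        · refine ⟨max 1 (min y' (n:ℤ)), by omega, by omega,
            le_trans ?_ ((le_max_right _ _).trans (le_max_right _ _))⟩
          simp only [etaJ', Hprime, chi, bar] at *
          split_ifs <;> omega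
      · refine ⟨max 1 (min x' (n:ℤ)), by omega, by omega,
          le_trans ?_ ((le_max_right _ _).trans (le_max_right _ _))⟩
        simp only [etaJ', Hprime, chi, bar] at *
        split_ifs <;> omega
    · by_cases hB : y' < y
      · refine ⟨max 1 (min x (n:ℤ)), by omega, by omega,
          le_trans ?_ ((le_max_left _ _).trans (le_max_left _ _))⟩
        simp only [thetaJ, Hprime, chi, bar] at *
        split_ifs <;> omega
      · refine ⟨1, by omega, by omega,
          le_trans ?_ ((le_max_right _ _).trans (le_max_left _ _))⟩
        simp only [thetaJ', Hprime, chi, bar] at *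
        split_ifs <;> omega
  · by_cases hA : x' ≤ x
    · by_cases hB : y' ≤ y
      · by_cases hC : x < y'
        · by_cases hxn : x ≤ (n:ℤ)
          · refine ⟨max 1 (min x (n:ℤ)), by omega, by omega,
              le_trans ?_ ((le_max_right _ _).trans (le_max_right _ _))⟩
            simp only [etaJ', Hprime, chi, bar] at *
            split_ifs <;> omega
          · refine ⟨max 1 (min (2*(n:ℤ)+1-x) (n:ℤ)), by omega, by omega,
              le_trans ?_ ((le_max_left _ _).trans (le_max_right _ _))⟩
            simp only [etaJ, Hprime, chi, bar] at *
            split_ifs <;> omega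
        · by_cases hyn : y' ≤ (n:ℤ)
          · refine ⟨max 1 (min y' (n:ℤ)), by omega, by omega,
              le_trans ?_ ((le_max_right _ _).trans (le_max_right _ _))⟩
            simp only [etaJ', Hprime, chi, bar] at *
            split_ifs <;> omega
          · refine ⟨max 1 (min (2*(n:ℤ)+1-x) (n:ℤ)), by omega, by omega,
              le_trans ?_ ((le_max_left _ _).trans (le_max_right _ _))⟩
            simp only [etaJ, Hprime, chi, bar] at *
            split_ifs <;> omega
      · by_cases hxn : x ≤ (n:ℤ)
        · refine ⟨max 1 (min x (n:ℤ)), by omega, by omega,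
            le_trans ?_ ((le_max_right _ _).trans (le_max_right _ _))⟩
          simp only [etaJ', Hprime, chi, bar] at *
          split_ifs <;> omega
        · refine ⟨max 1 (min (2*(n:ℤ)+1-x) (n:ℤ)), by omega, by omega,
            le_trans ?_ ((le_max_left _ _).trans (le_max_right _ _))⟩
          simp only [etaJ, Hprime, chi, bar] at *
          split_ifs <;> omega
    · by_cases hB : y' ≤ y
      · by_cases hyn : y ≤ (n:ℤ)
        · refine ⟨max 1 (min y (n:ℤ)), by omega, by omega,
            le_trans ?_ ((le_max_right _ _).trans (le_max_right _ _))⟩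
          simp only [etaJ', Hprime, chi, bar] at *
          split_ifs <;> omega
        · refine ⟨max 1 (min (2*(n:ℤ)+1-y') (n:ℤ)), by omega, by omega,
            le_trans ?_ ((le_max_left _ _).trans (le_max_right _ _))⟩
          simp only [etaJ, Hprime, chi, bar] at *
          split_ifs <;> omega
      · refine ⟨1, by omega, by omega,
          le_trans ?_ ((le_max_right _ _).trans (le_max_left _ _))⟩
        simp only [thetaJ', Hprime, chi, bar] at *
        split_ifs <;> omega

/-- the KKM energy function equals the simple formula `H'`. -/
theorem stmt_0 (n : ℕ) (hn : 2 ≤ n) (x y x' y' : ℤ)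
    (hx : 1 ≤ x) (hxy : x ≤ y) (hy : y ≤ 2 * (n : ℤ))
    (hx' : 1 ≤ x') (hxy' : x' ≤ y') (hy' : y' ≤ 2 * (n : ℤ)) :
    Henergy n (by omega) x y x' y' = Hprime n x y x' y' := by
  apply le_antisymm
  · apply Finset.sup'_le
    intro j hj
    rw [Finset.mem_Icc] at hj
    exact aux_upper n hn j x y x' y' hx hxy hy hx' hxy' hy' hj.1 hj.2
  · obtain ⟨j, h1, h2, h3⟩ := aux_lower n hn x y x' y' hx hxy hy hx' hxy' hy'
    rw [Henergy]
    exact le_trans h3 (Finset.le_sup'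
      (fun j => max (max (thetaJ n j x y x' y') (thetaJ' n j x y x' y'))
          (max (etaJ n j x y x' y') (etaJ' n j x y x' y')))
      (Finset.mem_Icc.mpr ⟨h1, h2⟩))
end

section
/- For all x ≤ y and x' ≤ y' in \overline{[n]}: (i) 0 ≤ H'((x,y)⊗(x',y')) ≤ 2; (ii) H'((x,y)⊗(x',y')) = 2 if and only if x ≥ y'; (iii) H'((x,y)⊗(x',y')) = 0 if and only if either (x < x' and y < y'), or (\bar y ≥ x = \bar{y'} = x'), or (\bar y = x = \bar{y'} < x'); (iv) in all other cases H'((x,y)⊗(x',y')) = 1. -/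
/-- basic properties of the simple energy formula `H'`:
it takes values in `{0,1,2}`, equals `2` iff `x ≥ y'`, equals `0` iff one of the
three listed cases holds, and equals `1` in all other cases. -/
theorem stmt_1 (n : ℕ) (hn : 2 ≤ n) (x y x' y' : ℤ)
    (hx : 1 ≤ x) (hxy : x ≤ y) (hy : y ≤ 2 * (n : ℤ))
    (hx' : 1 ≤ x') (hxy' : x' ≤ y') (hy' : y' ≤ 2 * (n : ℤ)) :
    (0 ≤ Hprime n x y x' y' ∧ Hprime n x y x' y' ≤ 2) ∧
    (Hprime n x y x' y' = 2 ↔ y' ≤ x) ∧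
    (Hprime n x y x' y' = 0 ↔
      ((x < x' ∧ y < y') ∨ (x ≤ bar n y ∧ x = bar n y' ∧ bar n y' = x') ∨ (bar n y = x ∧ x = bar n y' ∧ bar n y' < x'))) ∧
    (¬ y' ≤ x →
      ¬ ((x < x' ∧ y < y') ∨ (x ≤ bar n y ∧ x = bar n y' ∧ bar n y' = x') ∨ (bar n y = x ∧ x = bar n y' ∧ bar n y' < x')) →
      Hprime n x y x' y' = 1) := by
  simp only [Hprime, chi, bar]
  split_ifs <;> omega
end

section
/- Let p ≥ 0 be an integer and c_1,…,c_s ∈ C. The sequence p_{c_1},…,p_{c_s} of coloured integers all of size p is well-ordered for ≫_ε (i.e. p_{c_i} ≫_ε p_{c_{i+1}} for all i) if and only if ε(c_i,c_{i+1}) = 0 for all i ∈ {1,…,s−1}. In this case, there exist unique integers 1 ≤ u ≤ v ≤ s+1 such that {c_1,…,c_{u−1}} ⊆ C_sup, c_u = ⋯ = c_{v−1} is a single colour of C_free, and {c_v,…,c_s} ⊆ C_inf (with the convention that {c_a,…,c_b} = ∅ if a > b). -/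
open Classical

/-- The function `ε : C × (C ⊔ {c_∞}) → {0,1,2}` is *well-defined* with respect to the
decomposition `C = C_sup ⊔ C_free ⊔ C_inf` and the extra colour `c_∞`
(conditions (1)–(7) of Capparelli–Dousse–Konan, together with the range condition). -/
def WellDefinedEps {γ : Type*} (Csup Cfree Cinf : Set γ) (cinf : γ) (eps : γ → γ → ℤ) : Prop :=
  -- range condition: ε takes values in {0,1,2}
  (∀ c ∈ Csup ∪ Cfree ∪ Cinf, ∀ d ∈ insert cinf (Csup ∪ Cfree ∪ Cinf),
      eps c d = 0 ∨ eps c d = 1 ∨ eps c d = 2) ∧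
  -- (1) on C_free × C_free, ε(c,c') = χ(c ≠ c')
  (∀ c ∈ Cfree, eps c c = 0) ∧
  (∀ c ∈ Cfree, ∀ d ∈ Cfree, c ≠ d → eps c d = 1) ∧
  -- (2) C_sup vs C_free
  (∀ c ∈ Csup, ∀ d ∈ Cfree, (eps c d = 0 ∨ eps c d = 1) ∧ (eps d c = 1 ∨ eps d c = 2)) ∧
  (∀ c ∈ Csup, ∃ d ∈ Cfree, eps c d = 0) ∧
  -- (3) C_free vs C_inf
  (∀ c ∈ Cfree, ∀ d ∈ Cinf, (eps c d = 0 ∨ eps c d = 1) ∧ (eps d c = 1 ∨ eps d c = 2)) ∧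
  (∀ c ∈ Cinf, ∃ d ∈ Cfree, eps d c = 0) ∧
  -- (4) C_sup vs C_inf
  (∀ c ∈ Csup, ∀ d ∈ Cinf, (eps c d = 0 ∨ eps c d = 1) ∧ (eps d c = 1 ∨ eps d c = 2)) ∧
  (∀ c ∈ Csup, ∀ d ∈ Cinf, eps c d = 0 → ∃ g ∈ Cfree, eps c g = 0 ∧ eps g d = 0) ∧
  -- (5) C_sup × C_sup
  (∀ c ∈ Csup, ∀ d ∈ Csup, (eps c d = 0 ∨ eps c d = 1) →
      ∃ g ∈ Cfree, eps c g = 0 ∧ eps g d = 1) ∧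
  -- (6) C_inf × C_inf
  (∀ c ∈ Cinf, ∀ d ∈ Cinf, (eps c d = 0 ∨ eps c d = 1) →
      ∃ g ∈ Cfree, eps c g = 1 ∧ eps g d = 0) ∧
  -- (7) border conditions
  (∀ c ∈ Cfree, eps c cinf = 1) ∧
  (∀ c ∈ Cinf, eps c cinf = 1 ∨ eps c cinf = 2) ∧
  (∀ c ∈ Csup, eps c cinf = 0 ∨ eps c cinf = 1)

/-- a sequence `p_{c_1},…,p_{c_s}` of coloured integers of equal size `p`
is well-ordered for `≫_ε` iff `ε(c_i,c_{i+1}) = 0` for all `i`; in that case there are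
unique `1 ≤ u ≤ v ≤ s+1` such that the colours `c_1,…,c_{u-1}` lie in `C_sup`, the colours
`c_u,…,c_{v-1}` are all equal to a single colour of `C_free`, and `c_v,…,c_s` lie in `C_inf`. -/
theorem stmt_6 {γ : Type*} (Csup Cfree Cinf : Set γ) (cinf : γ) (eps : γ → γ → ℤ)
    (hd1 : Disjoint Csup Cfree) (hd2 : Disjoint Csup Cinf) (hd3 : Disjoint Cfree Cinf)
    (hcinf : cinf ∉ Csup ∪ Cfree ∪ Cinf)
    (hwd : WellDefinedEps Csup Cfree Cinf cinf eps)
    (p : ℤ) (hp : 0 ≤ p) (s : ℕ) (c : ℕ → γ)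
    (hc : ∀ i, 1 ≤ i → i ≤ s → c i ∈ Csup ∪ Cfree ∪ Cinf) :
    ((∀ i, 1 ≤ i → i < s → p - p ≥ eps (c i) (c (i + 1))) ↔
      (∀ i, 1 ≤ i → i < s → eps (c i) (c (i + 1)) = 0)) ∧
    ((∀ i, 1 ≤ i → i < s → eps (c i) (c (i + 1)) = 0) →
      ∃! uv : ℕ × ℕ, 1 ≤ uv.1 ∧ uv.1 ≤ uv.2 ∧ uv.2 ≤ s + 1 ∧
        (∀ i, 1 ≤ i → i < uv.1 → c i ∈ Csup) ∧
        (∀ i, uv.1 ≤ i → i < uv.2 → c i ∈ Cfree ∧ c i = c uv.1) ∧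
        (∀ i, uv.2 ≤ i → i ≤ s → c i ∈ Cinf)) := by
  obtain ⟨hrange, hff0, hff1, hsf, -, hfi, -, hsi, -, -, -, -, -, -⟩ := hwd
  constructor
  · constructor
    · intro h i h1 h2
      have hm1 := hc i h1 (le_of_lt h2)
      have hm2 := hc (i+1) (by omega) (by omega)
      have hr := hrange (c i) hm1 (c (i+1)) (Set.mem_insert_iff.mpr (Or.inr hm2))
      have hh := h i h1 h2
      omega
    · intro h i h1 h2
      have := h i h1 h2
      omega
  · intro h0
    have step_notsup : ∀ i, 1 ≤ i → i < s → c i ∉ Csup → c (i+1) ∉ Csup := by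
      intro i h1 h2 hns hmem
      have hi := hc i h1 (le_of_lt h2)
      have he := h0 i h1 h2
      rcases hi with (hi | hi) | hi
      · exact hns hi
      · have := (hsf (c (i+1)) hmem (c i) hi).2; omega
      · have := (hsi (c (i+1)) hmem (c i) hi).2; omega
    have step_inf : ∀ i, 1 ≤ i → i < s → c i ∈ Cinf → c (i+1) ∈ Cinf := by
      intro i h1 h2 hi
      have hj := hc (i+1) (by omega) (by omega)
      have he := h0 i h1 h2
      rcases hj with (hj | hj) | hj
      · have := (hsi (c (i+1)) hj (c i) hi).2; omega
      · have := (hfi (c (i+1)) hj (c i) hi).2; omega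
      · exact hj
    have hPu : ∃ n, (1 ≤ n ∧ n ≤ s ∧ c n ∉ Csup) ∨ n = s + 1 := ⟨s+1, Or.inr rfl⟩
    have hPv : ∃ n, (1 ≤ n ∧ n ≤ s ∧ c n ∈ Cinf) ∨ n = s + 1 := ⟨s+1, Or.inr rfl⟩
    set u := Nat.find hPu with hu_def
    set v := Nat.find hPv with hv_def
    have hu1 : 1 ≤ u := by
      rcases Nat.find_spec hPu with h | h
      · exact h.1
      · omega
    have hus : u ≤ s + 1 := Nat.find_le (Or.inr rfl)
    have hvs : v ≤ s + 1 := Nat.find_le (Or.inr rfl)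
    have hvinf_base : v ≤ s → c v ∈ Cinf := by
      intro hv
      rcases Nat.find_spec hPv with h | h
      · exact h.2.2
      · omega
    have huns_base : u ≤ s → c u ∉ Csup := by
      intro hu
      rcases Nat.find_spec hPu with h | h
      · exact h.2.2
      · omega
    have huv : u ≤ v := by
      apply Nat.find_le
      rcases Nat.find_spec hPv with h | h
      · exact Or.inl ⟨h.1, h.2.1, fun hs => Set.disjoint_left.1 hd2 hs h.2.2⟩
      · exact Or.inr h
    have hv1 : 1 ≤ v := le_trans hu1 huv
    have husup : ∀ i, 1 ≤ i → i < u → c i ∈ Csup := by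
      intro i h1 h2
      have hmin := Nat.find_min hPu h2
      by_contra hcs
      exact hmin (Or.inl ⟨h1, by omega, hcs⟩)
    have notinf : ∀ i, 1 ≤ i → i < v → c i ∉ Cinf := by
      intro i h1 h2 hci
      have hmin := Nat.find_min hPv h2
      exact hmin (Or.inl ⟨h1, by omega, hci⟩)
    have nsall : ∀ i, u ≤ i → i ≤ s → c i ∉ Csup := by
      intro i hi
      induction i, hi using Nat.le_induction with
      | base => exact huns_base
      | succ n hn ih =>
        intro hns
        exact step_notsup n (le_trans hu1 hn) (by omega) (ih (by omega))
    have infall : ∀ i, v ≤ i → i ≤ s → c i ∈ Cinf := by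
      intro i hi
      induction i, hi using Nat.le_induction with
      | base => exact hvinf_base
      | succ n hn ih =>
        intro hns
        exact step_inf n (le_trans hv1 hn) (by omega) (ih (by omega))
    have freemem : ∀ i, u ≤ i → i < v → c i ∈ Cfree := by
      intro i hi1 hi2
      have h1 : 1 ≤ i := le_trans hu1 hi1
      have hm := hc i h1 (by omega)
      rcases hm with (hm | hm) | hm
      · exact absurd hm (nsall i hi1 (by omega))
      · exact hm
      · exact absurd hm (notinf i h1 hi2)
    have freeeq : ∀ i, u ≤ i → i < v → c i = c u := by
      intro i hi
      induction i, hi using Nat.le_induction with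
      | base => intro _; rfl
      | succ n hn ih =>
        intro hlt
        have hnv : n < v := by omega
        have hnu : c n = c u := ih hnv
        by_contra hne
        have hne' : c n ≠ c (n+1) := by
          intro he; exact hne (he ▸ hnu)
        have := hff1 (c n) (freemem n hn hnv) (c (n+1)) (freemem (n+1) (by omega) hlt) hne'
        have := h0 n (le_trans hu1 hn) (by omega)
        omega
    refine ⟨(u, v), ⟨hu1, huv, hvs, husup, fun i h1 h2 => ⟨freemem i h1 h2, freeeq i h1 h2⟩, infall⟩, ?_⟩
    rintro ⟨u', v'⟩ ⟨h1', h2', h3', hsup', hfree', hinf'⟩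
    simp only at h1' h2' h3' hsup' hfree' hinf'
    have hu' : u' = u := by
      rcases lt_trichotomy u' u with h | h | h
      · exfalso
        have hs1 : c u' ∈ Csup := husup u' h1' h
        rcases lt_or_ge u' v' with hlt | hle
        · exact Set.disjoint_left.1 hd1 hs1 (hfree' u' le_rfl hlt).1
        · exact Set.disjoint_left.1 hd2 hs1 (hinf' u' hle (by omega))
      · exact h
      · exfalso
        have hs1 : c u ∈ Csup := hsup' u hu1 h
        rcases lt_or_ge u v with hlt | hle
        · exact Set.disjoint_left.1 hd1 hs1 (freemem u le_rfl hlt)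
        · exact Set.disjoint_left.1 hd2 hs1 (infall u (by omega) (by omega))
    have hv' : v' = v := by
      rcases lt_trichotomy v' v with h | h | h
      · exfalso
        have hfin : c v' ∈ Cinf := hinf' v' le_rfl (by omega)
        exact Set.disjoint_left.1 hd3 (freemem v' (by omega) h) hfin
      · exact h
      · exfalso
        have hfin : c v ∈ Cinf := infall v le_rfl (by omega)
        exact Set.disjoint_left.1 hd3 (hfree' v (by omega) h).1 hfin
    simp only [Prod.mk.injEq]
    exact ⟨hu', hv'⟩
end

section
/- Let (c_1,f) ∈ C_sup × C_free and let p be an integer. Then: (1) for any colour c_2 ∈ C ⊔ {c_∞} and any integer u ≥ 2 (so that p_{c_1}, (p−u)_{c_2} is well-ordered for ≫_ε), the sequence p_{c_1}, p_f, (p−u)_{c_2} is well-ordered for ≫_ε if and only if ε(c_1,f) = 0; (2) for any colour c_2 ∈ C_free ⊔ C_inf ⊔ {c_∞} with ε(c_1,c_2) ≤ 1, the sequence p_{c_1}, p_f, (p−1)_{c_2} is well-ordered for ≫_ε if and only if ε(c_1,f) = 0; (3) for any colour c_2 ∈ C_sup with ε(c_1,c_2) ∈ {0,1}, the sequence p_{c_1},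 p_f, (p−1)_{c_2} is well-ordered for ≫_ε if and only if ε(c_1,f) = 0 and ε(f,c_2) = 1. -/
open Classical

/-- the possible insertions of a free-coloured part `p_f` to the right of a
part `p_{c₁}` with `c₁ ∈ C_sup`. -/
theorem stmt_8 {γ : Type*} (Csup Cfree Cinf : Set γ) (cinf : γ) (eps : γ → γ → ℤ)
    (hd1 : Disjoint Csup Cfree) (hd2 : Disjoint Csup Cinf) (hd3 : Disjoint Cfree Cinf)
    (hcinf : cinf ∉ Csup ∪ Cfree ∪ Cinf)
    (hwd : WellDefinedEps Csup Cfree Cinf cinf eps)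
    (c₁ f : γ) (hc₁ : c₁ ∈ Csup) (hf : f ∈ Cfree) (p : ℤ) :
    -- (1) `p_{c₁}, p_f, (p-u)_{c₂}` for any colour `c₂` and any `u ≥ 2`
    (∀ c₂ ∈ insert cinf (Csup ∪ Cfree ∪ Cinf), ∀ u : ℤ, 2 ≤ u →
      ((p - p ≥ eps c₁ f ∧ p - (p - u) ≥ eps f c₂) ↔ eps c₁ f = 0)) ∧
    -- (2) `p_{c₁}, p_f, (p-1)_{c₂}` for `c₂ ∈ C_free ⊔ C_inf ⊔ {c_∞}` with `ε(c₁,c₂) ≤ 1`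
    (∀ c₂ ∈ insert cinf (Cfree ∪ Cinf), eps c₁ c₂ ≤ 1 →
      ((p - p ≥ eps c₁ f ∧ p - (p - 1) ≥ eps f c₂) ↔ eps c₁ f = 0)) ∧
    -- (3) `p_{c₁}, p_f, (p-1)_{c₂}` for `c₂ ∈ C_sup` with `ε(c₁,c₂) ∈ {0,1}`
    (∀ c₂ ∈ Csup, (eps c₁ c₂ = 0 ∨ eps c₁ c₂ = 1) →
      ((p - p ≥ eps c₁ f ∧ p - (p - 1) ≥ eps f c₂) ↔ (eps c₁ f = 0 ∧ eps f c₂ = 1))) := by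

  obtain ⟨hrange, hff0, hff1, hsf, -, hfi, -, -, -, -, -, hfcinf, -, -⟩ := hwd
  have hc1f : eps c₁ f = 0 ∨ eps c₁ f = 1 := (hsf c₁ hc₁ f hf).1
  refine ⟨?_, ?_, ?_⟩
  · intro c₂ hc₂ u hu
    have h2 : eps f c₂ = 0 ∨ eps f c₂ = 1 ∨ eps f c₂ = 2 :=
      hrange f (by simp [hf]) c₂ hc₂
    constructor
    · rintro ⟨h, -⟩; omega
    · intro h; constructor <;> omega
  · intro c₂ hc₂ _
    simp only [Set.mem_insert_iff, Set.mem_union] at hc₂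
    have h2 : eps f c₂ ≤ 1 := by
      rcases hc₂ with rfl | hc₂ | hc₂
      · exact le_of_eq (hfcinf f hf)
      · by_cases h : f = c₂
        · subst h; simp [hff0 f hf]
        · exact le_of_eq (hff1 f hf c₂ hc₂ h)
      · rcases (hfi f hf c₂ hc₂).1 with h | h <;> omega
    constructor
    · rintro ⟨h, -⟩; omega
    · intro h; constructor <;> omega
  · intro c₂ hc₂ _
    have h2 : eps f c₂ = 1 ∨ eps f c₂ = 2 := (hsf c₂ hc₂ f hf).2
    constructor
    · rintro ⟨h1, h3⟩; constructor <;> omega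
    · rintro ⟨h1, h3⟩; constructor <;> omega
end

section
/- Let ρ be the function on S × (S ⊔ {c_∞}) defined by ρ(c,c_∞) = ε(c,c_∞) for c ∈ S and ρ(c_{x',y'},c_{x,y}) = χ(x ≥ x') + χ(y ≥ y') − χ(y ≥ y' > x ≥ x') for all x ≤ y, x' ≤ y' ∈ \overline{[n]}. Let \tilde P_ρ^{c∞} be the set of finite sequences π = (π_0,…,π_{s−1},π_s = 0_{c_∞}) of coloured integers with colours of π_0,…,π_{s−1} in S and |π_i| − |π_{i+1}| ≥ ρ(c(π_i),c(π_{i+1})) for all 0 ≤ i ≤ s−1. Then, taking c_0 = c_∅, the set _{δ,γ}^{c_0}P_ε^{c∞} (i.e. the c_∅-regular sequences of P_ε^{c∞} avoiding the forbidden patterns determined by δ and γ) equals \tilde P_ρ^{c∞}. -/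
open Classical

/-- The energy function `H(b ⊗ b')` on the level 1 perfect crystal
`B = {∅} ⊔ {(x,y) : x ≤ y ∈ \overline{[n]}}` of type `C_n^{(1)}`
(`none` plays the role of the vertex `∅`). -/
noncomputable def Hfun (n : ℕ) : Option (ℤ × ℤ) → Option (ℤ × ℤ) → ℤ
  | none, none => 0
  | none, some _ => 1
  | some _, none => 1
  | some p, some q => Hprime n p.1 p.2 q.1 q.2

/-- The colours: `Sum.inl none = c_∅`, `Sum.inl (some (x,y)) = c_{x,y}`,
and `Sum.inr () = c_∞`. -/
abbrev Cl : Type := Option (ℤ × ℤ) ⊕ Unit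

/-- The colour `c_∅`. -/
def cEmpty : Cl := Sum.inl none

/-- The colour `c_{x,y}`. -/
def cPair (x y : ℤ) : Cl := Sum.inl (some (x, y))

/-- The colour `c_∞`. -/
def cInfty : Cl := Sum.inr ()

/-- `C_sup = {c_{x,y} : \bar y < x ≤ y}`. -/
def CsupSet (n : ℕ) : Set Cl :=
  {c | ∃ x y : ℤ, c = cPair x y ∧ bar n y < x ∧ x ≤ y ∧ y ≤ 2 * (n : ℤ)}

/-- `C_inf = {c_{x,y} : x ≤ y < \bar x}`. -/
def CinfSet (n : ℕ) : Set Cl :=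
  {c | ∃ x y : ℤ, c = cPair x y ∧ 1 ≤ x ∧ x ≤ y ∧ y < bar n x}

/-- `C_free = {c_∅} ∪ {c_{x,\bar x} : 1 ≤ x ≤ n}`. -/
def CfreeSet (n : ℕ) : Set Cl :=
  {cEmpty} ∪ {c | ∃ x : ℤ, c = cPair x (bar n x) ∧ 1 ≤ x ∧ x ≤ (n : ℤ)}

/-- The function `δ`: `δ(c_{x,y}) = c_{\bar y,y}` on `C_sup`, `δ(c_{x,y}) = c_{x,\bar x}`
on `C_inf`. -/
def deltaF (n : ℕ) : Cl → Cl
  | Sum.inl (some p) =>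
      if bar n p.2 < p.1 then cPair (bar n p.2) p.2 else cPair p.1 (bar n p.1)
  | c => c

/-- The function `γ` of the paper: `γ(c_{x,y},c_{x',y'}) = c_{z,\bar z}` with
`z = max{x', \bar y}` on `C_sup × C_inf`, `= c_{\bar y,y}` on `C_sup²`,
`= c_{x',\bar{x'}}` on `C_inf²`. -/
def gamF (n : ℕ) : Cl → Cl → Cl
  | Sum.inl (some p), Sum.inl (some q) =>
      if bar n p.2 < p.1 ∧ q.2 < bar n q.1 then
        cPair (max q.1 (bar n p.2)) (bar n (max q.1 (bar n p.2)))
      else if bar n p.2 < p.1 then cPair (bar n p.2) p.2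
      else cPair q.1 (bar n q.1)
  | c, _ => c

/-- The relation `k_c ≫_ε k'_{c'}` on coloured integers: `k - k' ≥ ε(c,c')`. -/
def ggE {γ : Type*} (eps : γ → γ → ℤ) (a b : ℤ × γ) : Prop := a.1 - b.1 ≥ eps a.2 b.2

/-- The set `P_ε^{c∞}` of finite sequences `(π_0,…,π_{s-1},π_s = 0_{c∞})` of coloured
integers, with colours of `π_0,…,π_{s-1}` in `C = C_sup ⊔ C_free ⊔ C_inf` and
`π_i ≫_ε π_{i+1}` for all `i`. -/
def PepsSet {γ : Type*} (Csup Cfree Cinf : Set γ) (cinf : γ) (eps : γ → γ → ℤ) :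
    Set (List (ℤ × γ)) :=
  {π | π.getLast? = some (0, cinf) ∧
       (∀ a ∈ π.dropLast, a.2 ∈ Csup ∪ Cfree ∪ Cinf) ∧
       π.Chain' (ggE eps)}

/-- The subset `_{δ,γ}^{c₀} P_ε^{c∞}` of `P_ε^{c∞}`: `c₀`-regular sequences avoiding the
forbidden patterns (i)–(vi) determined by `δ` and `g` (= `γ` of the paper). -/
def AvoidSet {γ : Type*} (Csup Cfree Cinf : Set γ) (cinf c0 : γ)
    (eps : γ → γ → ℤ) (δ : γ → γ) (g : γ → γ → γ) : Set (List (ℤ × γ)) :=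
  {π | (∀ a ∈ π, a.2 ≠ c0) ∧
    ∀ p : ℤ, 0 ≤ p →
      -- (i)
      (∀ c ∈ Cfree, c ≠ c0 → ¬ [(p, c), (p, c)] <:+: π) ∧
      -- (ii)
      (∀ c ∈ Csup, ∀ c' ∈ Cinf, eps c c' = 0 →
        ¬ [(p, c), (p, g c c'), (p, c')] <:+: π) ∧
      -- (iii)
      (∀ c ∈ Csup, ∀ c' ∈ Csup, (eps c c' = 0 ∨ eps c c' = 1) →
        ¬ [(p, c), (p, g c c'), (p - 1, c')] <:+: π) ∧
      -- (iv)
      (∀ c ∈ Cinf, ∀ c' ∈ Cinf, (eps c c' = 0 ∨ eps c c' = 1) →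
        ¬ [(p + 1, c), (p, g c c'), (p, c')] <:+: π) ∧
      -- (v)
      (∀ c ∈ Csup,
        (∀ c' ∈ insert cinf (Cfree ∪ Cinf), c' ≠ c0 →
          ¬ [(p, c), (p, δ c), (p - 1, c')] <:+: π) ∧
        (∀ c' ∈ insert cinf (Csup ∪ Cfree ∪ Cinf), c' ≠ c0 → ∀ u : ℤ, 2 ≤ u →
          ¬ [(p, c), (p, δ c), (p - u, c')] <:+: π)) ∧
      -- (vi)
      (∀ c' ∈ Cinf,
        (¬ [(p, δ c'), (p, c')] <+: π) ∧
        (∀ c ∈ Csup ∪ Cfree, c ≠ c0 →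
          ¬ [(p + 1, c), (p, δ c'), (p, c')] <:+: π) ∧
        (∀ c ∈ Csup ∪ Cfree ∪ Cinf, c ≠ c0 → ∀ u : ℤ, 2 ≤ u →
          ¬ [(p + u, c), (p, δ c'), (p, c')] <:+: π))}


/-- The set of secondary colours `S = C ∖ {c_∅}`. -/
def SColSet (n : ℕ) : Set Cl :=
  (CsupSet n ∪ CfreeSet n ∪ CinfSet n) \ {cEmpty}

/-- The function `ρ` on `S × (S ⊔ {c_∞})`:
`ρ(c_{x',y'},c_{x,y}) = χ(x ≥ x') + χ(y ≥ y') - χ(y ≥ y' > x ≥ x')`, and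
`ρ(c, c_∞) = ε(c, c_∞)`. -/
noncomputable def rhoF (eps : Cl → Cl → ℤ) : Cl → Cl → ℤ :=
  fun c d =>
    match c, d with
    | Sum.inl (some p), Sum.inl (some q) =>
        chi (p.1 ≤ q.1) + chi (p.2 ≤ q.2) - chi (p.2 ≤ q.2 ∧ q.1 < p.2 ∧ p.1 ≤ q.1)
    | c, d => eps c d

/-- The set `\tilde P_ρ^{c∞}` of sequences `(π_0,…,π_{s-1},π_s = 0_{c∞})` with colours of
`π_0,…,π_{s-1}` in `S` and `|π_i| - |π_{i+1}| ≥ ρ(c(π_i), c(π_{i+1}))` for all `i`. -/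
noncomputable def TildeP (n : ℕ) (eps : Cl → Cl → ℤ) : Set (List (ℤ × Cl)) :=
  {π | π.getLast? = some (0, cInfty) ∧
       (∀ a ∈ π.dropLast, a.2 ∈ SColSet n) ∧
       π.Chain' (fun a b => a.1 - b.1 ≥ rhoF eps a.2 b.2)}

section Helpers

lemma cPair_ne_cEmpty (x y : ℤ) : cPair x y ≠ cEmpty := by simp [cPair, cEmpty]

lemma cInfty_ne_cEmpty : cInfty ≠ cEmpty := by simp [cInfty, cEmpty]

lemma cInfty_ne_cPair (x y : ℤ) : cInfty ≠ cPair x y := by simp [cInfty, cPair]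

lemma cPair_inj {x y x' y' : ℤ} : cPair x y = cPair x' y' ↔ x = x' ∧ y = y' := by
  simp [cPair]

lemma mem_CsupSet {n : ℕ} {u v : ℤ} :
    cPair u v ∈ CsupSet n ↔ bar n v < u ∧ u ≤ v ∧ v ≤ 2*(n:ℤ) := by
  constructor
  · rintro ⟨x, y, h, h1, h2, h3⟩
    obtain ⟨rfl, rfl⟩ := cPair_inj.mp h
    exact ⟨h1, h2, h3⟩
  · rintro ⟨h1, h2, h3⟩; exact ⟨u, v, rfl, h1, h2, h3⟩

lemma mem_CinfSet {n : ℕ} {u v : ℤ} :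
    cPair u v ∈ CinfSet n ↔ 1 ≤ u ∧ u ≤ v ∧ v < bar n u := by
  constructor
  · rintro ⟨x, y, h, h1, h2, h3⟩
    obtain ⟨rfl, rfl⟩ := cPair_inj.mp h
    exact ⟨h1, h2, h3⟩
  · rintro ⟨h1, h2, h3⟩; exact ⟨u, v, rfl, h1, h2, h3⟩

lemma mem_CfreeSet {n : ℕ} {u v : ℤ} :
    cPair u v ∈ CfreeSet n ↔ v = bar n u ∧ 1 ≤ u ∧ u ≤ (n:ℤ) := by
  constructor
  · rintro (h | ⟨x, h, h1, h2⟩)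
    · exact absurd h (cPair_ne_cEmpty u v)
    · obtain ⟨rfl, rfl⟩ := cPair_inj.mp h
      exact ⟨rfl, h1, h2⟩
  · rintro ⟨h1, h2, h3⟩; exact Or.inr ⟨u, by rw [h1], h2, h3⟩

lemma mem_C_inl {n : ℕ} {c : Cl} (hc : c ∈ CsupSet n ∪ CfreeSet n ∪ CinfSet n) :
    ∃ b, c = Sum.inl b := by
  rcases hc with (h | h) | h
  · obtain ⟨x, y, rfl, -⟩ := h; exact ⟨some (x, y), rfl⟩
  · rcases h with h | ⟨x, rfl, -⟩
    · exact ⟨none, h⟩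
    · exact ⟨some (x, bar n x), rfl⟩
  · obtain ⟨x, y, rfl, -⟩ := h; exact ⟨some (x, y), rfl⟩

lemma mem_C_pair {n : ℕ} {c : Cl} (hc : c ∈ CsupSet n ∪ CfreeSet n ∪ CinfSet n)
    (hne : c ≠ cEmpty) : ∃ x y : ℤ, c = cPair x y ∧ 1 ≤ x ∧ x ≤ y ∧ y ≤ 2*(n:ℤ) := by
  rcases hc with (h | h) | h
  · obtain ⟨x, y, rfl, h1, h2, h3⟩ := h
    exact ⟨x, y, rfl, by unfold bar at h1; omega, h2, h3⟩
  · rcases h with h | ⟨x, rfl, h1, h2⟩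
    · exact absurd h hne
    · exact ⟨x, bar n x, rfl, h1, by unfold bar; omega, by unfold bar; omega⟩
  · obtain ⟨x, y, rfl, h1, h2, h3⟩ := h
    exact ⟨x, y, rfl, h1, h2, by unfold bar at h3; omega⟩

lemma rhoF_pair (eps : Cl → Cl → ℤ) (x' y' x y : ℤ) :
    rhoF eps (cPair x' y') (cPair x y)
      = chi (x' ≤ x) + chi (y' ≤ y) - chi (y' ≤ y ∧ x < y' ∧ x' ≤ x) := rfl

lemma rhoF_inr (eps : Cl → Cl → ℤ) (c : Cl) (u : Unit) :
    rhoF eps c (Sum.inr u) = eps c (Sum.inr u) := by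
  rcases c with (_ | p) | v <;> rfl

lemma deltaF_sup {n : ℕ} {x y : ℤ} (h : bar n y < x) :
    deltaF n (cPair x y) = cPair (bar n y) y := by
  show (if bar n y < x then _ else _) = _
  rw [if_pos h]

lemma deltaF_inf {n : ℕ} {x y : ℤ} (h : ¬ bar n y < x) :
    deltaF n (cPair x y) = cPair x (bar n x) := by
  show (if bar n y < x then _ else _) = _
  rw [if_neg h]

lemma gamF_si {n : ℕ} {x y x' y' : ℤ} (h1 : bar n y < x) (h2 : y' < bar n x') :
    gamF n (cPair x y) (cPair x' y')
      = cPair (max x' (bar n y)) (bar n (max x' (bar n y))) := by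
  show (if bar n y < x ∧ y' < bar n x' then _ else _) = _
  rw [if_pos ⟨h1, h2⟩]

lemma gamF_ss {n : ℕ} {x y x' y' : ℤ} (h1 : bar n y < x) (h2 : ¬ y' < bar n x') :
    gamF n (cPair x y) (cPair x' y') = cPair (bar n y) y := by
  show (if bar n y < x ∧ y' < bar n x' then _ else if bar n y < x then _ else _) = _
  rw [if_neg (by tauto), if_pos h1]

lemma gamF_ii {n : ℕ} {x y x' y' : ℤ} (h1 : ¬ bar n y < x) :
    gamF n (cPair x y) (cPair x' y') = cPair x' (bar n x') := by
  show (if bar n y < x ∧ y' < bar n x' then _ else if bar n y < x then _ else _) = _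
  rw [if_neg (by tauto), if_neg h1]

lemma bar_bar {n : ℕ} (x : ℤ) : bar n (bar n x) = x := by unfold bar; ring

lemma infix2 {α : Type*} (l : List α) (i : ℕ) (h : i + 1 < l.length) :
    [l[i]'(by omega), l[i+1]'h] <:+: l := by
  refine ⟨l.take i, l.drop (i+2), ?_⟩
  have h1 : i < l.length := by omega
  have ht := List.take_append_drop i l
  rw [List.drop_eq_getElem_cons h1, List.drop_eq_getElem_cons h] at ht
  simpa using ht

lemma infix3 {α : Type*} (l : List α) (i : ℕ) (h : i + 2 < l.length) :
    [l[i]'(by omega), l[i+1]'(by omega), l[i+2]'h] <:+: l := by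
  refine ⟨l.take i, l.drop (i+3), ?_⟩
  have h1 : i < l.length := by omega
  have h2 : i + 1 < l.length := by omega
  have ht := List.take_append_drop i l
  rw [List.drop_eq_getElem_cons h1, List.drop_eq_getElem_cons h2,
    List.drop_eq_getElem_cons h] at ht
  simpa using ht

lemma prefix2 {α : Type*} (l : List α) (h : 1 < l.length) :
    [l[0]'(by omega), l[1]'h] <+: l := by
  refine ⟨l.drop 2, ?_⟩
  have h0 : 0 < l.length := by omega
  have ht := List.take_append_drop 0 l
  rw [List.drop_eq_getElem_cons h0, List.drop_eq_getElem_cons h] at ht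
  simpa using ht

end Helpers

lemma Hprime_nonneg (n : ℕ) (x y x' y' : ℤ) : 0 ≤ Hprime n x y x' y' := by
  unfold Hprime chi bar; split_ifs <;> omega

lemma L_le (n : ℕ) (x y x' y' : ℤ) :
    Hprime n x y x' y' ≤ chi (x' ≤ x) + chi (y' ≤ y) - chi (y' ≤ y ∧ x < y' ∧ x' ≤ x) := by
  unfold Hprime chi bar; split_ifs <;> omega

lemma L_bad (n : ℕ) (x' y' x y : ℤ) (h1 : 1 ≤ x') (h2 : x' ≤ y') (h3 : y' ≤ 2*(n:ℤ))
    (h4 : 1 ≤ x) (h5 : x ≤ y) (h6 : y ≤ 2*(n:ℤ))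
    (hlt : Hprime n x y x' y' < chi (x' ≤ x) + chi (y' ≤ y) - chi (y' ≤ y ∧ x < y' ∧ x' ≤ x)) :
    Hprime n x y x' y' = 0 ∧
    chi (x' ≤ x) + chi (y' ≤ y) - chi (y' ≤ y ∧ x < y' ∧ x' ≤ x) = 1 ∧
    ((bar n y' < x' ∧ x = bar n y' ∧ y = y') ∨
     (y < bar n x ∧ x' = x ∧ y' = bar n x) ∨
     (x' = x ∧ y' = y ∧ y' = bar n x')) := by
  unfold Hprime chi bar at *; split_ifs at * <;> omega

lemma L3a (n : ℕ) (x' y' x'' y'' : ℤ) (hs : bar n y' < x') (h2 : x' ≤ y') (h3 : y' ≤ 2*(n:ℤ))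
    (h4 : 1 ≤ x'') (h5 : x'' ≤ y'') (h6 : y'' ≤ 2*(n:ℤ))
    (hH : Hprime n x'' y'' (bar n y') y' = 0) :
    (x'' = bar n y' ∧ y'' = y') ∨
    (y'' < bar n x'' ∧ x'' ≤ bar n y' ∧ Hprime n x'' y'' x' y' = 0) := by
  unfold Hprime chi bar at *; split_ifs at * <;> omega

lemma L3b (n : ℕ) (x' y' x'' y'' : ℤ) (hs : bar n y' < x') (h2 : x' ≤ y') (h3 : y' ≤ 2*(n:ℤ))
    (hs2 : bar n y'' < x'') (h5 : x'' ≤ y'') (h6 : y'' ≤ 2*(n:ℤ))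
    (hH : Hprime n x'' y'' (bar n y') y' ≤ 1) :
    Hprime n x'' y'' x' y' ≤ 1 := by
  unfold Hprime chi bar at *; split_ifs at * <;> omega

lemma L4a (n : ℕ) (x y u v : ℤ) (h1 : 1 ≤ x) (h2 : x ≤ y) (hi : y < bar n x)
    (h4 : 1 ≤ u) (h5 : u ≤ v) (h6 : v ≤ 2*(n:ℤ))
    (hH : Hprime n x (bar n x) u v = 0) :
    (u = x ∧ v = bar n x) ∨
    (bar n v < u ∧ bar n v ≤ x ∧ Hprime n x y u v = 0) := by
  unfold Hprime chi bar at *; split_ifs at * <;> omega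

lemma L4b (n : ℕ) (x y u v : ℤ) (h1 : 1 ≤ x) (h2 : x ≤ y) (hi : y < bar n x)
    (h4 : 1 ≤ u) (h5 : u ≤ v) (hi2 : v < bar n u)
    (hH : Hprime n x (bar n x) u v ≤ 1) :
    Hprime n x y u v ≤ 1 := by
  unfold Hprime chi bar at *; split_ifs at * <;> omega

lemma R1 (n : ℕ) (z : ℤ) (h1 : 1 ≤ z) (h2 : z ≤ (n:ℤ)) :
    1 ≤ chi (z ≤ z) + chi (bar n z ≤ bar n z) - chi (bar n z ≤ bar n z ∧ z < bar n z ∧ z ≤ z) := by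
  unfold chi bar; split_ifs <;> omega

lemma R2 (n : ℕ) (x y : ℤ) (hs : bar n y < x) (h2 : x ≤ y) :
    1 ≤ chi (x ≤ bar n y) + chi (y ≤ y) - chi (y ≤ y ∧ bar n y < y ∧ x ≤ bar n y) := by
  unfold chi bar; split_ifs <;> omega

lemma R3 (n : ℕ) (x y : ℤ) (hi : y < bar n x) :
    1 ≤ chi (x ≤ x) + chi (bar n x ≤ y) - chi (bar n x ≤ y ∧ x < bar n x ∧ x ≤ x) := by
  unfold chi bar; split_ifs <;> omega

set_option maxHeartbeats 1000000 in
lemma R4 (n : ℕ) (x y x' y' z : ℤ) (hs : bar n y < x) (h2 : x ≤ y)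
    (h4 : 1 ≤ x') (h5 : x' ≤ y') (hi : y' < bar n x')
    (hz : z = x' ∨ z = bar n y) (hz2 : x' ≤ z) (hz3 : bar n y ≤ z)
    (hH : Hprime n x' y' x y = 0) :
    1 ≤ chi (x ≤ z) + chi (y ≤ bar n z) - chi (y ≤ bar n z ∧ z < y ∧ x ≤ z) ∨
    1 ≤ chi (z ≤ x') + chi (bar n z ≤ y') - chi (bar n z ≤ y' ∧ x' < bar n z ∧ z ≤ x') := by
  unfold Hprime chi bar at *; split_ifs at * <;> omega

/-- with `c₀ = c_∅` and the concrete `δ`, `γ` of the level 1 crystal of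
`C_n^{(1)}`, the pattern-avoiding set `_{δ,γ}^{c₀} P_ε^{c∞}` equals `\tilde P_ρ^{c∞}`. -/
theorem stmt_10 (n : ℕ) (hn : 2 ≤ n) (eps : Cl → Cl → ℤ)
    (heps : ∀ b b' : Option (ℤ × ℤ),
      Sum.inl b ∈ CsupSet n ∪ CfreeSet n ∪ CinfSet n →
      Sum.inl b' ∈ CsupSet n ∪ CfreeSet n ∪ CinfSet n →
      eps (Sum.inl b') (Sum.inl b) = Hfun n b b')
    (hb1 : ∀ c ∈ CfreeSet n, eps c cInfty = 1)
    (hb2 : ∀ c ∈ CinfSet n, eps c cInfty = 1 ∨ eps c cInfty = 2)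
    (hb3 : ∀ c ∈ CsupSet n, eps c cInfty = 0 ∨ eps c cInfty = 1) :
    PepsSet (CsupSet n) (CfreeSet n) (CinfSet n) cInfty eps ∩
      AvoidSet (CsupSet n) (CfreeSet n) (CinfSet n) cInfty cEmpty eps (deltaF n) (gamF n)
    = TildeP n eps := by
  apply Set.Subset.antisymm
  · rintro l ⟨⟨hlast, hcolC, hchain⟩, hno, hpat⟩
    have hlen : l ≠ [] := by rintro rfl; simp at hlast
    have hlastAt : ∀ j (hj : j < l.length), j = l.length - 1 → l[j]'hj = ((0:ℤ), cInfty) := by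
      intro j hj hj'
      subst hj'
      have h1 := List.getLast?_eq_getLast hlen
      rw [hlast] at h1
      rw [List.getLast_eq_getElem] at h1
      simpa using h1.symm
    have hcolAt : ∀ i (hi : i < l.length - 1),
        (l[i]'(by omega)).2 ∈ CsupSet n ∪ CfreeSet n ∪ CinfSet n := by
      intro i hi
      have h1 : i < l.dropLast.length := by rw [List.length_dropLast]; omega
      have h2 := hcolC _ (List.getElem_mem h1)
      rwa [List.getElem_dropLast] at h2
    have hneAt : ∀ i (hi : i < l.length), (l[i]'hi).2 ≠ cEmpty :=
      fun i hi => hno _ (List.getElem_mem hi)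
    have hepsnn : ∀ c, c ∈ CsupSet n ∪ CfreeSet n ∪ CinfSet n →
        ∀ d, (d ∈ CsupSet n ∪ CfreeSet n ∪ CinfSet n ∨ d = cInfty) → 0 ≤ eps c d := by
      intro c hc d hd
      rcases hd with hd | rfl
      · obtain ⟨bc, rfl⟩ := mem_C_inl hc
        obtain ⟨bd, rfl⟩ := mem_C_inl hd
        rw [heps bd bc hd hc]
        rcases bd with _ | q <;> rcases bc with _ | p
        · simp [Hfun]
        · simp [Hfun]
        · simp [Hfun]
        · exact Hprime_nonneg n q.1 q.2 p.1 p.2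
      · rcases hc with (h | h) | h
        · rcases hb3 c h with h' | h' <;> omega
        · have := hb1 c h; omega
        · rcases hb2 c h with h' | h' <;> omega
    have hnn : ∀ i (hi : i < l.length), 0 ≤ (l[i]'hi).1 := by
      have key : ∀ k i (hi : i < l.length), l.length ≤ i + k + 1 → 0 ≤ (l[i]'hi).1 := by
        intro k
        induction k with
        | zero =>
          intro i hi hle
          rw [hlastAt i hi (by omega)]
        | succ k ih =>
          intro i hi hle
          by_cases hend : i = l.length - 1
          · rw [hlastAt i hi hend]
          · have hi1 : i < l.length - 1 := by omega
            have hib : i + 1 < l.length := by omega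
            have hrel := List.isChain_iff_getElem.mp hchain i (by omega)
            have hrel' : (l[i]'hi).1 - (l[i+1]'hib).1 ≥ eps (l[i]'hi).2 (l[i+1]'hib).2 := hrel
            have h0 := ih (i+1) hib (by omega)
            have hcA := hcolAt i hi1
            have hcB : (l[i+1]'hib).2 ∈ CsupSet n ∪ CfreeSet n ∪ CinfSet n ∨
                (l[i+1]'hib).2 = cInfty := by
              by_cases h : i + 1 = l.length - 1
              · right; rw [hlastAt _ hib h]
              · left; exact hcolAt (i+1) (by omega)
            have := hepsnn _ hcA _ hcB
            omega
      intro i hi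
      exact key l.length i hi (by omega)
    refine ⟨hlast, ?_, ?_⟩
    · intro a ha
      exact ⟨hcolC a ha, fun h => hno a (List.dropLast_subset l ha) (by simpa using h)⟩
    refine List.isChain_iff_getElem.mpr ?_
    intro i hi
    have hia : i < l.length := by omega
    have hib : i + 1 < l.length := by omega
    have hrel0 := List.isChain_iff_getElem.mp hchain i hi
    have hrel1 : (l[i]'hia).1 - (l[i+1]'hib).1 ≥ eps (l[i]'hia).2 (l[i+1]'hib).2 := hrel0
    have haC := hcolAt i (by omega)
    have hane := hneAt i hia
    obtain ⟨x', y', ha2, hax1, hax2, hax3⟩ := mem_C_pair haC hane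
    show (l[i]'hia).1 - (l[i+1]'hib).1 ≥ rhoF eps (l[i]'hia).2 (l[i+1]'hib).2
    by_cases hend : i + 1 = l.length - 1
    · rw [hlastAt _ hib hend, ha2] at hrel1 ⊢
      exact hrel1
    have hib1 : i + 1 < l.length - 1 := by omega
    have hbC := hcolAt (i+1) hib1
    have hbne := hneAt (i+1) hib
    obtain ⟨x, y, hb2', hbx1, hbx2, hbx3⟩ := mem_C_pair hbC hbne
    have hE : eps (cPair x' y') (cPair x y) = Hprime n x y x' y' :=
      heps (some (x,y)) (some (x',y'))
        (hb2' ▸ hbC : cPair x y ∈ CsupSet n ∪ CfreeSet n ∪ CinfSet n)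
        (ha2 ▸ haC : cPair x' y' ∈ CsupSet n ∪ CfreeSet n ∪ CinfSet n)
    rw [ha2, hb2'] at hrel1
    rw [hE] at hrel1
    rw [ha2, hb2', rhoF_pair]
    by_cases hok : chi (x' ≤ x) + chi (y' ≤ y) - chi (y' ≤ y ∧ x < y' ∧ x' ≤ x) ≤
      Hprime n x y x' y'
    · omega
    push_neg at hok
    obtain ⟨hH0, hR1, hcases⟩ := L_bad n x' y' x y hax1 hax2 hax3 hbx1 hbx2 hbx3 hok
    by_cases hge1 : (l[i]'hia).1 - (l[i+1]'hib).1 ≥ 1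
    · omega
    exfalso
    have hveq : (l[i]'hia).1 = (l[i+1]'hib).1 := by omega
    have hp : 0 ≤ (l[i+1]'hib).1 := hnn (i+1) hib
    obtain ⟨pat1, pat2, pat3, pat4, pat5, pat6⟩ := hpat ((l[i+1]'hib).1) hp
    have haeq : l[i]'hia = ((l[i+1]'hib).1, cPair x' y') := Prod.ext hveq ha2
    have hbeq : l[i+1]'hib = ((l[i+1]'hib).1, cPair x y) := Prod.ext rfl hb2'
    rcases hcases with ⟨hsup, hxx, hyy⟩ | ⟨hinfc, hxx, hyy⟩ | ⟨hxx, hyy, hfree⟩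
    · -- α : a ∈ Csup, b = δ a
      have hxx' : x = 2*(n:ℤ)+1-y' := hxx
      have hsup' : 2*(n:ℤ)+1-y' < x' := hsup
      have hsupmem : cPair x' y' ∈ CsupSet n := mem_CsupSet.mpr ⟨hsup, hax2, hax3⟩
      have hdel : deltaF n (cPair x' y') = cPair x y := by
        rw [deltaF_sup hsup, cPair_inj]
        exact ⟨hxx.symm, hyy.symm⟩
      have hfreeb : cPair x y ∈ CfreeSet n := by
        refine mem_CfreeSet.mpr ⟨show y = 2*(n:ℤ)+1-x by omega, by omega, by omega⟩
      have hid : i + 2 < l.length := by omega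
      have hrel2 : (l[i+1]'hib).1 - (l[i+2]'hid).1 ≥
          eps (l[i+1]'hib).2 (l[i+2]'hid).2 := List.isChain_iff_getElem.mp hchain (i+1) (by omega)
      rw [hb2'] at hrel2
      have hdne := hneAt (i+2) hid
      have hdCor : ((l[i+2]'hid).2 ∈ CsupSet n ∪ CfreeSet n ∪ CinfSet n) ∨
          (l[i+2]'hid) = ((0:ℤ), cInfty) := by
        by_cases h : i + 2 = l.length - 1
        · right; exact hlastAt _ hid h
        · left; exact hcolAt (i+2) (by omega)
      rcases hdCor with hdC | hdend
      · obtain ⟨x'', y'', hd2, hdx1, hdx2, hdx3⟩ := mem_C_pair hdC hdne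
        rw [hd2] at hrel2
        have hE2 : eps (cPair x y) (cPair x'' y'') = Hprime n x'' y'' x y :=
          heps (some (x'',y'')) (some (x,y))
            (hd2 ▸ hdC : cPair x'' y'' ∈ CsupSet n ∪ CfreeSet n ∪ CinfSet n)
            (hb2' ▸ hbC : cPair x y ∈ CsupSet n ∪ CfreeSet n ∪ CinfSet n)
        rw [hE2] at hrel2
        have hHd0 := Hprime_nonneg n x'' y'' x y
        rcases (by omega : (l[i+2]'hid).1 = (l[i+1]'hib).1 ∨
            (l[i+2]'hid).1 = (l[i+1]'hib).1 - 1 ∨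
            (l[i+2]'hid).1 ≤ (l[i+1]'hib).1 - 2) with hdv | hdv | hdv
        · -- same value
          have hH20' : Hprime n x'' y'' (bar n y') y' = 0 := by
            rw [← hxx, ← hyy]; omega
          rcases L3a n x' y' x'' y'' hsup hax2 hax3 hdx1 hdx2 hdx3 hH20' with
            ⟨hu, hv⟩ | ⟨hi2, hle2, hH3⟩
          · have hdb : cPair x'' y'' = cPair x y := by
              rw [cPair_inj]
              constructor <;> omega
            apply pat1 (cPair x y) hfreeb (cPair_ne_cEmpty x y)
            have hinf2 : [l[i+1]'hib, l[i+2]'hid] <:+: l := infix2 l (i+1) hid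
            have hdeq : l[i+2]'hid = ((l[i+1]'hib).1, cPair x y) :=
              Prod.ext (by omega) (by rw [hd2, hdb])
            rw [hbeq, hdeq] at hinf2
            exact hinf2
          · have hdinf : cPair x'' y'' ∈ CinfSet n := mem_CinfSet.mpr ⟨hdx1, hdx2, hi2⟩
            have hgam : gamF n (cPair x' y') (cPair x'' y'') = cPair x y := by
              rw [gamF_si hsup hi2, max_eq_right hle2, cPair_inj]
              refine ⟨hxx.symm, ?_⟩
              rw [bar_bar]; omega
            have hepsad : eps (cPair x' y') (cPair x'' y'') = 0 := by
              have ht : eps (cPair x' y') (cPair x'' y'') = Hprime n x'' y'' x' y' :=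
                heps (some (x'',y'')) (some (x',y'))
                  (hd2 ▸ hdC : cPair x'' y'' ∈ CsupSet n ∪ CfreeSet n ∪ CinfSet n)
                  (ha2 ▸ haC : cPair x' y' ∈ CsupSet n ∪ CfreeSet n ∪ CinfSet n)
              rw [ht]; exact hH3
            apply pat2 _ hsupmem _ hdinf hepsad
            have hinf3 : [l[i]'hia, l[i+1]'hib, l[i+2]'hid] <:+: l := infix3 l i hid
            have hdeq : l[i+2]'hid = ((l[i+1]'hib).1, cPair x'' y'') :=
              Prod.ext (by omega) hd2
            rw [haeq, hbeq, hdeq] at hinf3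
            rw [hgam]
            exact hinf3
        · -- value p - 1
          by_cases hdsup : cPair x'' y'' ∈ CsupSet n
          · obtain ⟨hds1, hds2, hds3⟩ := mem_CsupSet.mp hdsup
            have hHle1 : Hprime n x'' y'' (bar n y') y' ≤ 1 := by
              rw [← hxx, ← hyy]; omega
            have hH3 := L3b n x' y' x'' y'' hsup hax2 hax3 hds1 hds2 hds3 hHle1
            have hepsad : eps (cPair x' y') (cPair x'' y'') = Hprime n x'' y'' x' y' :=
              heps (some (x'',y'')) (some (x',y'))
                (hd2 ▸ hdC : cPair x'' y'' ∈ CsupSet n ∪ CfreeSet n ∪ CinfSet n)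
                (ha2 ▸ haC : cPair x' y' ∈ CsupSet n ∪ CfreeSet n ∪ CinfSet n)
            have hor : eps (cPair x' y') (cPair x'' y'') = 0 ∨
                eps (cPair x' y') (cPair x'' y'') = 1 := by
              rw [hepsad]
              have := Hprime_nonneg n x'' y'' x' y'
              omega
            apply pat3 _ hsupmem _ hdsup hor
            have hgam : gamF n (cPair x' y') (cPair x'' y'') = cPair x y := by
              have hds1' : 2*(n:ℤ)+1-y'' < x'' := hds1
              have hns : ¬ y'' < bar n x'' := by
                show ¬ y'' < 2*(n:ℤ)+1-x''
                omega
              rw [gamF_ss hsup hns, cPair_inj]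
              exact ⟨hxx.symm, hyy.symm⟩
            have hinf3 : [l[i]'hia, l[i+1]'hib, l[i+2]'hid] <:+: l := infix3 l i hid
            have hdeq : l[i+2]'hid = ((l[i+1]'hib).1 - 1, cPair x'' y'') :=
              Prod.ext (by omega) hd2
            rw [haeq, hbeq, hdeq] at hinf3
            rw [hgam]
            exact hinf3
          · have hdmem : cPair x'' y'' ∈ insert cInfty (CfreeSet n ∪ CinfSet n) := by
              rcases (hd2 ▸ hdC : cPair x'' y'' ∈ CsupSet n ∪ CfreeSet n ∪ CinfSet n) with
                (h | h) | h
              · exact absurd h hdsup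
              · exact Set.mem_insert_iff.mpr (Or.inr (Or.inl h))
              · exact Set.mem_insert_iff.mpr (Or.inr (Or.inr h))
            apply (pat5 _ hsupmem).1 _ hdmem (cPair_ne_cEmpty x'' y'')
            rw [hdel]
            have hinf3 : [l[i]'hia, l[i+1]'hib, l[i+2]'hid] <:+: l := infix3 l i hid
            have hdeq : l[i+2]'hid = ((l[i+1]'hib).1 - 1, cPair x'' y'') :=
              Prod.ext (by omega) hd2
            rw [haeq, hbeq, hdeq] at hinf3
            exact hinf3
        · -- value ≤ p - 2
          have hdmem : cPair x'' y'' ∈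
              insert cInfty (CsupSet n ∪ CfreeSet n ∪ CinfSet n) :=
            Set.mem_insert_iff.mpr (Or.inr (hd2 ▸ hdC))
          apply (pat5 _ hsupmem).2 _ hdmem (cPair_ne_cEmpty x'' y'')
            ((l[i+1]'hib).1 - (l[i+2]'hid).1) (by omega)
          rw [hdel]
          have hinf3 : [l[i]'hia, l[i+1]'hib, l[i+2]'hid] <:+: l := infix3 l i hid
          have hdeq : l[i+2]'hid =
              ((l[i+1]'hib).1 - ((l[i+1]'hib).1 - (l[i+2]'hid).1), cPair x'' y'') :=
            Prod.ext (by ring) hd2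
          rw [haeq, hbeq, hdeq] at hinf3
          exact hinf3
      · -- d = (0, cInfty)
        rw [hdend] at hrel2
        have hrel2' : (l[i+1]'hib).1 - (0:ℤ) ≥ eps (cPair x y) cInfty := hrel2
        rw [hb1 _ hfreeb] at hrel2'
        by_cases hp1 : (l[i+1]'hib).1 = 1
        · apply (pat5 _ hsupmem).1 cInfty (Set.mem_insert _ _) cInfty_ne_cEmpty
          rw [hdel]
          have hinf3 : [l[i]'hia, l[i+1]'hib, l[i+2]'hid] <:+: l := infix3 l i hid
          have hdeq : l[i+2]'hid = ((l[i+1]'hib).1 - 1, cInfty) := by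
            rw [hdend, Prod.mk.injEq]
            exact ⟨by omega, rfl⟩
          rw [haeq, hbeq, hdeq] at hinf3
          exact hinf3
        · apply (pat5 _ hsupmem).2 cInfty (Set.mem_insert _ _) cInfty_ne_cEmpty
            ((l[i+1]'hib).1) (by omega)
          rw [hdel]
          have hinf3 : [l[i]'hia, l[i+1]'hib, l[i+2]'hid] <:+: l := infix3 l i hid
          have hdeq : l[i+2]'hid = ((l[i+1]'hib).1 - (l[i+1]'hib).1, cInfty) := by
            rw [hdend, Prod.mk.injEq]
            exact ⟨by ring, rfl⟩
          rw [haeq, hbeq, hdeq] at hinf3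
          exact hinf3
    · -- β : b ∈ Cinf, a = δ b
      have hinfc' : y < 2*(n:ℤ)+1-x := hinfc
      have hbinf : cPair x y ∈ CinfSet n := mem_CinfSet.mpr ⟨hbx1, hbx2, hinfc⟩
      have hni : ¬ bar n y < x := by
        show ¬ 2*(n:ℤ)+1-y < x
        omega
      have hdel : deltaF n (cPair x y) = cPair x' y' := by
        rw [deltaF_inf hni, cPair_inj]
        exact ⟨hxx.symm, hyy.symm⟩
      have hyy' : y' = 2*(n:ℤ)+1-x := hyy
      have hafree : cPair x' y' ∈ CfreeSet n := by
        refine mem_CfreeSet.mpr ⟨show y' = 2*(n:ℤ)+1-x' by omega, by omega, by omega⟩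
      obtain _ | j := i
      · -- prefix pattern
        apply (pat6 _ hbinf).1
        rw [hdel]
        have hpre : [l[0]'hia, l[0+1]'hib] <+: l := prefix2 l (by omega)
        rw [haeq, hbeq] at hpre
        exact hpre
      · have hja : j < l.length := by omega
        have hje : j < l.length - 1 := by omega
        have heC := hcolAt j hje
        have hene := hneAt j hja
        obtain ⟨u, v, he2, heu1, heu2, heu3⟩ := mem_C_pair heC hene
        have hrelE : (l[j]'hja).1 - (l[j+1]'hia).1 ≥ eps (l[j]'hja).2 (l[j+1]'hia).2 :=
          List.isChain_iff_getElem.mp hchain j (by omega)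
        rw [he2, ha2] at hrelE
        have hEe : eps (cPair u v) (cPair x' y') = Hprime n x' y' u v :=
          heps (some (x',y')) (some (u,v))
            (ha2 ▸ haC : cPair x' y' ∈ CsupSet n ∪ CfreeSet n ∪ CinfSet n)
            (he2 ▸ heC : cPair u v ∈ CsupSet n ∪ CfreeSet n ∪ CinfSet n)
        rw [hEe] at hrelE
        have hE0' : Hprime n x (bar n x) u v = Hprime n x' y' u v := by
          rw [← hyy, ← hxx]
        have hHnn := Hprime_nonneg n x' y' u v
        have hinf3 : [l[j]'hja, l[j+1]'hia, l[j+1+1]'hib] <:+: l := infix3 l j hib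
        rcases (by omega : (l[j]'hja).1 = (l[j+1+1]'hib).1 ∨
            (l[j]'hja).1 = (l[j+1+1]'hib).1 + 1 ∨
            (l[j]'hja).1 ≥ (l[j+1+1]'hib).1 + 2) with hev | hev | hev
        · -- e at same value
          have hH0 : Hprime n x' y' u v = 0 := by omega
          have hE0 : Hprime n x (bar n x) u v = 0 := by rw [hE0']; exact hH0
          rcases L4a n x y u v hbx1 hbx2 hinfc heu1 heu2 heu3 hE0 with
            ⟨hu, hv⟩ | ⟨hsupe, hlee, hH3⟩
          · have hv' : v = 2*(n:ℤ)+1-x := hv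
            apply pat1 (cPair x' y') hafree (cPair_ne_cEmpty x' y')
            have hinf2 : [l[j]'hja, l[j+1]'hia] <:+: l := infix2 l j hia
            have heeq : l[j]'hja = ((l[j+1+1]'hib).1, cPair x' y') :=
              Prod.ext (by omega) (by rw [he2, cPair_inj]; exact ⟨by omega, by omega⟩)
            rw [heeq, haeq] at hinf2
            exact hinf2
          · have hesup : cPair u v ∈ CsupSet n := mem_CsupSet.mpr ⟨hsupe, heu2, heu3⟩
            have hepse : eps (cPair u v) (cPair x y) = 0 := by
              have ht : eps (cPair u v) (cPair x y) = Hprime n x y u v :=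
                heps (some (x,y)) (some (u,v))
                  (hb2' ▸ hbC : cPair x y ∈ CsupSet n ∪ CfreeSet n ∪ CinfSet n)
                  (he2 ▸ heC : cPair u v ∈ CsupSet n ∪ CfreeSet n ∪ CinfSet n)
              rw [ht]; exact hH3
            have hgam : gamF n (cPair u v) (cPair x y) = cPair x' y' := by
              rw [gamF_si hsupe hinfc, max_eq_left hlee, cPair_inj]
              exact ⟨hxx.symm, hyy.symm⟩
            apply pat2 _ hesup _ hbinf hepse
            rw [hgam]
            have heeq : l[j]'hja = ((l[j+1+1]'hib).1, cPair u v) :=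
              Prod.ext (by omega) he2
            rw [heeq, haeq, hbeq] at hinf3
            exact hinf3
        · -- e at value p + 1
          by_cases heinf : cPair u v ∈ CinfSet n
          · obtain ⟨-, -, hvi⟩ := mem_CinfSet.mp heinf
            have hH1 : Hprime n x (bar n x) u v ≤ 1 := by rw [hE0']; omega
            have hH3 := L4b n x y u v hbx1 hbx2 hinfc heu1 heu2 hvi hH1
            have hor : eps (cPair u v) (cPair x y) = 0 ∨
                eps (cPair u v) (cPair x y) = 1 := by
              have ht : eps (cPair u v) (cPair x y) = Hprime n x y u v :=
                heps (some (x,y)) (some (u,v))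
                  (hb2' ▸ hbC : cPair x y ∈ CsupSet n ∪ CfreeSet n ∪ CinfSet n)
                  (he2 ▸ heC : cPair u v ∈ CsupSet n ∪ CfreeSet n ∪ CinfSet n)
              rw [ht]
              have := Hprime_nonneg n x y u v
              omega
            have hgamii : gamF n (cPair u v) (cPair x y) = cPair x' y' := by
              have hvi' : v < 2*(n:ℤ)+1-u := hvi
              have hniu : ¬ bar n v < u := by
                show ¬ 2*(n:ℤ)+1-v < u
                omega
              rw [gamF_ii hniu, cPair_inj]
              exact ⟨hxx.symm, hyy.symm⟩
            apply pat4 _ heinf _ hbinf hor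
            rw [hgamii]
            have heeq : l[j]'hja = ((l[j+1+1]'hib).1 + 1, cPair u v) :=
              Prod.ext (by omega) he2
            rw [heeq, haeq, hbeq] at hinf3
            exact hinf3
          · have hmem : cPair u v ∈ CsupSet n ∪ CfreeSet n := by
              rcases (he2 ▸ heC : cPair u v ∈ CsupSet n ∪ CfreeSet n ∪ CinfSet n) with
                (h | h) | h
              · exact Or.inl h
              · exact Or.inr h
              · exact absurd h heinf
            apply (pat6 _ hbinf).2.1 _ hmem (cPair_ne_cEmpty u v)
            rw [hdel]
            have heeq : l[j]'hja = ((l[j+1+1]'hib).1 + 1, cPair u v) :=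
              Prod.ext (by omega) he2
            rw [heeq, haeq, hbeq] at hinf3
            exact hinf3
        · -- e at value ≥ p + 2
          apply (pat6 _ hbinf).2.2 _
            (he2 ▸ heC : cPair u v ∈ CsupSet n ∪ CfreeSet n ∪ CinfSet n)
            (cPair_ne_cEmpty u v) ((l[j]'hja).1 - (l[j+1+1]'hib).1) (by omega)
          rw [hdel]
          have heeq : l[j]'hja =
              ((l[j+1+1]'hib).1 + ((l[j]'hja).1 - (l[j+1+1]'hib).1), cPair u v) :=
            Prod.ext (by ring) he2
          rw [heeq, haeq, hbeq] at hinf3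
          exact hinf3
    · -- γ : repeated free colour
      have hcc : cPair x' y' = cPair x y := by
        rw [cPair_inj]; exact ⟨hxx, hyy⟩
      have hfree' : y' = 2*(n:ℤ)+1-x' := hfree
      have hfreemem : cPair x y ∈ CfreeSet n := by
        refine mem_CfreeSet.mpr ⟨show y = 2*(n:ℤ)+1-x by omega, by omega, by omega⟩
      apply pat1 (cPair x y) hfreemem (cPair_ne_cEmpty x y)
      have hinf2 : [l[i]'hia, l[i+1]'hib] <:+: l := infix2 l i hib
      rw [haeq, hbeq, hcc] at hinf2
      exact hinf2

  · rintro l ⟨hlast, hcol, hchain⟩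
    have hlen : l ≠ [] := by rintro rfl; simp at hlast
    have hlastAt : ∀ j (hj : j < l.length), j = l.length - 1 → l[j]'hj = ((0:ℤ), cInfty) := by
      intro j hj hj'
      subst hj'
      have h1 := List.getLast?_eq_getLast hlen
      rw [hlast] at h1
      rw [List.getLast_eq_getElem] at h1
      simpa using h1.symm
    have hcolAt : ∀ i (hi : i < l.length - 1), (l[i]'(by omega)).2 ∈ SColSet n := by
      intro i hi
      have h1 : i < l.dropLast.length := by rw [List.length_dropLast]; omega
      have h2 := hcol _ (List.getElem_mem h1)
      rwa [List.getElem_dropLast] at h2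
    have hchain2 : ∀ (a b : ℤ × Cl), [a, b] <:+: l → a.1 - b.1 ≥ rhoF eps a.2 b.2 := by
      intro a b hinf
      exact (List.isChain_cons_cons.mp (hchain.infix hinf)).1
    have hchain3 : ∀ (a b c : ℤ × Cl), [a, b, c] <:+: l →
        (a.1 - b.1 ≥ rhoF eps a.2 b.2) ∧ (b.1 - c.1 ≥ rhoF eps b.2 c.2) := by
      intro a b c hinf
      have h := hchain.infix hinf
      exact ⟨(List.isChain_cons_cons.mp h).1, (List.isChain_cons_cons.mp (List.isChain_cons_cons.mp h).2).1⟩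
    refine ⟨⟨hlast, fun a ha => (hcol a ha).1, ?_⟩, ?_, ?_⟩
    · -- Chain' (ggE eps)
      refine List.isChain_iff_getElem.mpr ?_
      intro i hi
      have hia : i < l.length := by omega
      have hib : i + 1 < l.length := by omega
      have hrel := List.isChain_iff_getElem.mp hchain i hi
      have haS := hcolAt i (by omega)
      obtain ⟨x', y', ha2, hax1, hax2, hax3⟩ := mem_C_pair haS.1 (by simpa using haS.2)
      show (l[i]'hia).1 - (l[i+1]'hib).1 ≥ eps (l[i]'hia).2 (l[i+1]'hib).2
      by_cases hend : i + 1 = l.length - 1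
      · rw [hlastAt (i+1) hib hend] at hrel ⊢
        rw [ha2] at hrel ⊢
        have hr' : (l[i]'hia).1 - (0:ℤ) ≥ rhoF eps (cPair x' y') cInfty := hrel
        have he : rhoF eps (cPair x' y') cInfty = eps (cPair x' y') cInfty :=
          rhoF_inr eps _ ()
        rw [he] at hr'
        exact hr'
      · have hbS := hcolAt (i+1) (by omega)
        obtain ⟨x, y, hb2', hbx1, hbx2, hbx3⟩ := mem_C_pair hbS.1 (by simpa using hbS.2)
        rw [ha2, hb2'] at hrel ⊢
        rw [rhoF_pair] at hrel
        have hE : eps (cPair x' y') (cPair x y) = Hprime n x y x' y' :=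
          heps (some (x,y)) (some (x',y'))
            (hb2' ▸ hbS.1 : cPair x y ∈ CsupSet n ∪ CfreeSet n ∪ CinfSet n)
            (ha2 ▸ haS.1 : cPair x' y' ∈ CsupSet n ∪ CfreeSet n ∪ CinfSet n)
        rw [hE]
        have := L_le n x y x' y'
        omega
    · -- no cEmpty
      intro a ha
      have hsp := List.dropLast_concat_getLast hlen
      rw [← hsp] at ha
      rcases List.mem_append.mp ha with h | h
      · have := (hcol a h).2
        simpa using this
      · have ha' : a = l.getLast hlen := by simpa using h
        have hgl : l.getLast hlen = ((0:ℤ), cInfty) := by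
          rw [List.getLast_eq_getElem]
          exact hlastAt _ (by have := List.length_pos_iff.mpr hlen; omega) rfl
        rw [ha', hgl]
        exact cInfty_ne_cEmpty
    · -- patterns
      intro p hp
      refine ⟨?_, ?_, ?_, ?_, ?_, ?_⟩
      · -- (i)
        rintro c hc hne hinf
        rcases hc with h | ⟨z, rfl, hz1, hz2⟩
        · exact hne h
        · have hr : p - p ≥ rhoF eps (cPair z (bar n z)) (cPair z (bar n z)) :=
            hchain2 _ _ hinf
          rw [rhoF_pair] at hr
          have := R1 n z hz1 hz2
          omega
      · -- (ii)
        rintro c hc c' hc' h0 hinf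
        obtain ⟨x, y, rfl, hs, hs2, hs3⟩ := hc
        obtain ⟨x', y', rfl, hi1, hi2, hi3⟩ := hc'
        rw [gamF_si hs hi3] at hinf
        have r12 : (p - p ≥ rhoF eps (cPair x y) (cPair (max x' (bar n y)) (bar n (max x' (bar n y))))) ∧
            (p - p ≥ rhoF eps (cPair (max x' (bar n y)) (bar n (max x' (bar n y)))) (cPair x' y')) :=
          hchain3 _ _ _ hinf
        obtain ⟨r1, r2⟩ := r12
        rw [rhoF_pair] at r1 r2
        have hE : eps (cPair x y) (cPair x' y') = Hprime n x' y' x y :=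
          heps (some (x',y')) (some (x,y)) (Or.inr ⟨x', y', rfl, hi1, hi2, hi3⟩)
            (Or.inl (Or.inl ⟨x, y, rfl, hs, hs2, hs3⟩))
        rw [hE] at h0
        have h4 := R4 n x y x' y' (max x' (bar n y)) hs hs2 hi1 hi2 hi3
          (max_choice x' (bar n y)) (le_max_left _ _) (le_max_right _ _) h0
        rcases h4 with h | h <;> omega
      · -- (iii)
        rintro c hc c' hc' h01 hinf
        obtain ⟨x, y, rfl, hs, hs2, hs3⟩ := hc
        obtain ⟨x', y', rfl, hs', hs2', hs3'⟩ := hc'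
        have hns : ¬ y' < bar n x' := by unfold bar at hs' ⊢; omega
        rw [gamF_ss hs hns] at hinf
        have r1 : p - p ≥ rhoF eps (cPair x y) (cPair (bar n y) y) :=
          (hchain3 _ _ _ hinf).1
        rw [rhoF_pair] at r1
        have := R2 n x y hs hs2
        omega
      · -- (iv)
        rintro c hc c' hc' h01 hinf
        obtain ⟨x, y, rfl, hi1, hi2, hi3⟩ := hc
        obtain ⟨x', y', rfl, hi1', hi2', hi3'⟩ := hc'
        have hni : ¬ bar n y < x := by unfold bar at hi3 ⊢; omega
        rw [gamF_ii hni] at hinf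
        have r2 : p - p ≥ rhoF eps (cPair x' (bar n x')) (cPair x' y') :=
          (hchain3 _ _ _ hinf).2
        rw [rhoF_pair] at r2
        have := R3 n x' y' hi3'
        omega
      · -- (v)
        rintro c hc
        obtain ⟨x, y, rfl, hs, hs2, hs3⟩ := hc
        rw [deltaF_sup hs]
        constructor
        · rintro c' - - hinf
          have r1 : p - p ≥ rhoF eps (cPair x y) (cPair (bar n y) y) :=
            (hchain3 _ _ _ hinf).1
          rw [rhoF_pair] at r1
          have := R2 n x y hs hs2
          omega
        · rintro c' - - u - hinf
          have r1 : p - p ≥ rhoF eps (cPair x y) (cPair (bar n y) y) :=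
            (hchain3 _ _ _ hinf).1
          rw [rhoF_pair] at r1
          have := R2 n x y hs hs2
          omega
      · -- (vi)
        rintro c' hc'
        obtain ⟨x, y, rfl, hi1, hi2, hi3⟩ := hc'
        have hni : ¬ bar n y < x := by unfold bar at hi3 ⊢; omega
        rw [deltaF_inf hni]
        refine ⟨?_, ?_, ?_⟩
        · intro hpre
          have hr : p - p ≥ rhoF eps (cPair x (bar n x)) (cPair x y) :=
            hchain2 _ _ hpre.isInfix
          rw [rhoF_pair] at hr
          have := R3 n x y hi3
          omega
        · rintro c - - hinf
          have r2 : p - p ≥ rhoF eps (cPair x (bar n x)) (cPair x y) :=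
            (hchain3 _ _ _ hinf).2
          rw [rhoF_pair] at r2
          have := R3 n x y hi3
          omega
        · rintro c - - u - hinf
          have r2 : p - p ≥ rhoF eps (cPair x (bar n x)) (cPair x y) :=
            (hchain3 _ _ _ hinf).2
          rw [rhoF_pair] at r2
          have := R3 n x y hi3
          omega
end

section
/- For all x ≤ y, x' ≤ y' ∈ O and all k,l ∈ ℤ: k_{c_{x,y}} ≫_ρ l_{c_{x',y'}} if and only if η(k_{c_{x,y}}) > η(l_{c_{x',y'}}) and ζ(k_{c_{x,y}}) > ζ(l_{c_{x',y'}}) (where > is the strict order on primary-coloured integers). -/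
open Classical

/-- A primary-coloured integer `k_{c_u}` is the pair `(k, u)`. -/
abbrev PCInt : Type := ℤ × ℤ

/-- A secondary-coloured integer `k_{c_{x,y}}` is the pair `(k, (x, y))` with `x ≤ y`. -/
abbrev SCInt : Type := ℤ × (ℤ × ℤ)

/-- The order on primary-coloured integers: `k_{c_u} ≥ l_{c_v} ↔ k - l ≥ χ(u < v)`. -/
def pge (a b : PCInt) : Prop := a.1 - b.1 ≥ if a.2 < b.2 then 1 else 0

/-- The strict order on primary-coloured integers: `k_{c_u} > l_{c_v} ↔ k - l ≥ χ(u ≤ v)`. -/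
def pgt (a b : PCInt) : Prop := a.1 - b.1 ≥ if a.2 ≤ b.2 then 1 else 0

/-- `u` is a valid primary colour: `u ∈ O = {1,…,m}`. -/
def PVal (m : ℕ) (u : ℤ) : Prop := 1 ≤ u ∧ u ≤ (m : ℤ)

/-- `(x,y)` is a valid secondary colour: `x ≤ y ∈ O = {1,…,m}`. -/
def SVal (m : ℕ) (c : ℤ × ℤ) : Prop := 1 ≤ c.1 ∧ c.1 ≤ c.2 ∧ c.2 ≤ (m : ℤ)

/-- `η(2k_{c_{x,y}}) = k_{c_y}` and `η((2k+1)_{c_{x,y}}) = (k+1)_{c_x}`. -/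
def etaP (a : SCInt) : PCInt :=
  if a.1 % 2 = 0 then (a.1 / 2, a.2.2) else ((a.1 - 1) / 2 + 1, a.2.1)

/-- `ζ(2k_{c_{x,y}}) = k_{c_x}` and `ζ((2k+1)_{c_{x,y}}) = k_{c_y}`. -/
def zetaP (a : SCInt) : PCInt :=
  if a.1 % 2 = 0 then (a.1 / 2, a.2.1) else ((a.1 - 1) / 2, a.2.2)

/-- `ρ(c_{x',y'}, c_{x,y}) = χ(x ≥ x') + χ(y ≥ y') - χ(y ≥ y' > x ≥ x')`
(the first argument is the colour of the earlier, larger part). -/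
noncomputable def rho (c d : ℤ × ℤ) : ℤ :=
  chi (c.1 ≤ d.1) + chi (c.2 ≤ d.2) - chi (c.2 ≤ d.2 ∧ d.1 < c.2 ∧ c.1 ≤ d.1)

/-- `k_c ≫_ρ l_d ↔ k - l ≥ ρ(c, d)`. -/
noncomputable def ggrho (a b : SCInt) : Prop := a.1 - b.1 ≥ rho a.2 b.2

/-- `k_{c_{x,y}} ≫_ρ l_{c_{x',y'}}` iff `η(k_{c_{x,y}}) > η(l_{c_{x',y'}})`
and `ζ(k_{c_{x,y}}) > ζ(l_{c_{x',y'}})`. -/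
theorem stmt_12 (m : ℕ) (hm : 1 ≤ m) (k l x y x' y' : ℤ)
    (h1 : 1 ≤ x) (h2 : x ≤ y) (h3 : y ≤ (m : ℤ))
    (h4 : 1 ≤ x') (h5 : x' ≤ y') (h6 : y' ≤ (m : ℤ)) :
    ggrho (k, (x, y)) (l, (x', y')) ↔
      (pgt (etaP (k, (x, y))) (etaP (l, (x', y'))) ∧
       pgt (zetaP (k, (x, y))) (zetaP (l, (x', y')))) := by
  simp only [ggrho, rho, chi, pgt, etaP, zetaP]
  split_ifs <;> simp <;> omega
end

section
/- The map (π_0,…,π_{s−1}, k_c + l_d) ↦ ((η(π_0),…,η(π_{s−1}), k_c), (ζ(π_0),…,ζ(π_{s−1}), l_d)) is a bijection from P^{k_c+l_d}_ρ to F^{k_c,l_d}_> which preserves the size and the colour sequence. -/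
open Classical

/-- The sum `k_{c_u} + l_{c_v} = (k+l)_{c_u c_v}` of two primary-coloured integers, as a
secondary-coloured integer. -/
def addPC (a b : PCInt) : SCInt := (a.1 + b.1, (min a.2 b.2, max a.2 b.2))

/-- `P^{g}_ρ`: finite sequences of secondary-coloured integers whose consecutive parts
satisfy `≫_ρ` and whose last part equals `g`. -/
noncomputable def PRhoLast (m : ℕ) (g : SCInt) : Set (List SCInt) :=
  {π | π.getLast? = some g ∧ (∀ a ∈ π, SVal m a.2) ∧ π.Chain' ggrho}

/-- `F^{k_c,l_d}_>`: the `C_n^{(1)}`-Frobenius partitions with relation `>` and ground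
`k_c, l_d` — pairs `(μ,ν)` of sequences of primary-coloured integers of the same length,
strictly decreasing for `>`, with last parts `k_c` and `l_d`, and satisfying
`ν_j + 1 ≥ μ_j ≥ ν_j` for all `j < s`. -/
def FrobSet (m : ℕ) (kc ld : PCInt) : Set (List PCInt × List PCInt) :=
  {mn | mn.1.length = mn.2.length ∧
        mn.1.getLast? = some kc ∧ mn.2.getLast? = some ld ∧
        (∀ a ∈ mn.1, PVal m a.2) ∧ (∀ a ∈ mn.2, PVal m a.2) ∧
        mn.1.Chain' pgt ∧ mn.2.Chain' pgt ∧
        (∀ j : ℕ, j + 1 < mn.1.length → ∀ a b : PCInt,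
          mn.1[j]? = some a → mn.2[j]? = some b →
          pge a b ∧ pge (b.1 + 1, b.2) a)}

/-!
Write `π ↦ (η π, ζ π)` for the splitting of a secondary-coloured integer. For a part of colour
`c_{x,y}` with `x ≤ y` the two halves satisfy `ζ π ≤ η π ≤ ζ π + 1` and add up to `π` again;
conversely, a pair `(μ, ν)` with `ν + 1 ≥ μ ≥ ν` is split back into itself after forming
`μ + ν`. So splitting is a bijection between ordered-colour parts and such pairs, with inverse
the sum. The weight `ρ` is chosen exactly so that `π ≫_ρ π'` holds iff both `η π > η π'` and
`ζ π > ζ π'`, which is checked by a case analysis on the parities of the two parts. Hence the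
chain condition on `π` is equivalent to both halves being `>`-decreasing, and splitting the
sequence part by part is the required bijection; size and colours are preserved part by part.
-/

theorem ggrho_iff_pgt_etaP_and_pgt_zetaP {a b : SCInt} (ha : a.2.1 ≤ a.2.2)
    (hb : b.2.1 ≤ b.2.2) :
    ggrho a b ↔ pgt (etaP a) (etaP b) ∧ pgt (zetaP a) (zetaP b) := by
  rcases Int.emod_two_eq_zero_or_one a.1 with h1 | h1 <;>
  rcases Int.emod_two_eq_zero_or_one b.1 with h2 | h2 <;>
  simp only [ggrho, rho, chi, pgt, etaP, zetaP, h1, h2, reduceIte] <;> split_ifs <;> omega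

theorem isChain_ggrho_iff {l : List SCInt} (hl : ∀ a ∈ l, a.2.1 ≤ a.2.2) :
    l.IsChain ggrho ↔ (l.map etaP).IsChain pgt ∧ (l.map zetaP).IsChain pgt := by
  rw [List.isChain_map, List.isChain_map]
  simp only [List.isChain_iff_getElem, ← forall_and]
  exact forall₂_congr fun _ _ =>
    ggrho_iff_pgt_etaP_and_pgt_zetaP (hl _ (List.getElem_mem _)) (hl _ (List.getElem_mem _))

/-- The condition `ν_j + 1 ≥ μ_j ≥ ν_j` on the `j`-th parts `(μ_j, ν_j)` of a Frobenius
partition. -/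
def IsFrobColumn (a b : PCInt) : Prop := pge a b ∧ pge (b.1 + 1, b.2) a

theorem isFrobColumn_etaP_zetaP {a : SCInt} (h : a.2.1 ≤ a.2.2) :
    IsFrobColumn (etaP a) (zetaP a) := by
  rcases Int.emod_two_eq_zero_or_one a.1 with h1 | h1 <;>
  simp only [IsFrobColumn, pge, etaP, zetaP, h1, reduceIte] <;> split_ifs <;> omega

theorem addPC_etaP_zetaP {a : SCInt} (h : a.2.1 ≤ a.2.2) : addPC (etaP a) (zetaP a) = a := by
  obtain ⟨k, x, y⟩ := a
  rcases Int.emod_two_eq_zero_or_one k with hk | hk <;>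
  simp only [addPC, etaP, zetaP, hk, reduceIte, min_def, max_def, Prod.mk.injEq] at h ⊢ <;>
  split_ifs <;> omega

theorem etaP_addPC {a b : PCInt} (h : IsFrobColumn a b) : etaP (addPC a b) = a := by
  obtain ⟨k, u⟩ := a
  obtain ⟨l, v⟩ := b
  simp only [IsFrobColumn, pge] at h
  simp only [addPC, etaP, min_def, max_def]
  split_ifs at h ⊢ <;> ext <;> dsimp only <;> omega

theorem zetaP_addPC {a b : PCInt} (h : IsFrobColumn a b) : zetaP (addPC a b) = b := by
  obtain ⟨k, u⟩ := a
  obtain ⟨l, v⟩ := b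
  simp only [IsFrobColumn, pge] at h
  simp only [addPC, zetaP, min_def, max_def]
  split_ifs at h ⊢ <;> ext <;> dsimp only <;> omega

theorem zipWith_addPC_map_etaP_map_zetaP {l : List SCInt} (hl : ∀ a ∈ l, a.2.1 ≤ a.2.2) :
    List.zipWith addPC (l.map etaP) (l.map zetaP) = l := by
  rw [List.zipWith_map, List.zipWith_self]
  exact (List.map_congr_left fun a ha => addPC_etaP_zetaP (hl a ha)).trans (List.map_id' l)

theorem map_etaP_zipWith_addPC {μ ν : List PCInt} (h : List.Forall₂ IsFrobColumn μ ν) :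
    (List.zipWith addPC μ ν).map etaP = μ := by
  induction h with
  | nil => rfl
  | cons hab _ ih => simp [etaP_addPC hab, ih]

theorem map_zetaP_zipWith_addPC {μ ν : List PCInt} (h : List.Forall₂ IsFrobColumn μ ν) :
    (List.zipWith addPC μ ν).map zetaP = ν := by
  induction h with
  | nil => rfl
  | cons hab _ ih => simp [zetaP_addPC hab, ih]

theorem List.getLast?_zipWith_of_length_eq {α β γ : Type*} {f : α → β → γ} {l₁ : List α}
    {l₂ : List β} (h : l₁.length = l₂.length) {a : α} {b : β} (ha : l₁.getLast? = some a)
    (hb : l₂.getLast? = some b) : (List.zipWith f l₁ l₂).getLast? = some (f a b) := by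
  rw [List.getLast?_eq_getElem?] at ha hb ⊢
  rw [List.getElem?_zipWith, List.length_zipWith, ← h, Nat.min_self, ha, h, hb]

theorem pVal_etaP {m : ℕ} {a : SCInt} (h : SVal m a.2) : PVal m (etaP a).2 := by
  unfold SVal at h
  unfold etaP; split_ifs <;> constructor <;> dsimp only <;> omega

theorem pVal_zetaP {m : ℕ} {a : SCInt} (h : SVal m a.2) : PVal m (zetaP a).2 := by
  unfold SVal at h
  unfold zetaP; split_ifs <;> constructor <;> dsimp only <;> omega

theorem sVal_addPC {m : ℕ} {a b : PCInt} (ha : PVal m a.2) (hb : PVal m b.2) :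
    SVal m (addPC a b).2 :=
  ⟨le_min ha.1 hb.1, min_le_max, max_le ha.2 hb.2⟩

theorem forall₂_isFrobColumn_of_mem_frobSet {m : ℕ} {kc ld : PCInt} {μ ν : List PCInt}
    (h : (μ, ν) ∈ FrobSet m kc ld) (hground : IsFrobColumn kc ld) :
    List.Forall₂ IsFrobColumn μ ν := by
  obtain ⟨hlen : μ.length = ν.length, hμ, hν, -, -, -, -, hcol⟩ := h
  rw [List.forall₂_iff_get]
  refine ⟨hlen, fun i hi₁ hi₂ => ?_⟩
  simp only [List.get_eq_getElem]
  by_cases hi : i + 1 < μ.length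
  · exact hcol i hi _ _ (List.getElem?_eq_getElem hi₁) (List.getElem?_eq_getElem hi₂)
  · rw [List.getLast?_eq_getElem?, show μ.length - 1 = i by omega,
      List.getElem?_eq_getElem hi₁, Option.some.injEq] at hμ
    rw [List.getLast?_eq_getElem?, show ν.length - 1 = i by omega,
      List.getElem?_eq_getElem hi₂, Option.some.injEq] at hν
    rwa [hμ, hν]

theorem map_etaP_map_zetaP_mem_frobSet {m : ℕ} {kc ld : PCInt} {π : List SCInt}
    (hπ : π ∈ PRhoLast m (addPC kc ld)) (hground : IsFrobColumn kc ld) :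
    (π.map etaP, π.map zetaP) ∈ FrobSet m kc ld := by
  obtain ⟨hlast, hval, hchain⟩ := hπ
  have hcol : ∀ a ∈ π, a.2.1 ≤ a.2.2 := fun a ha => (hval a ha).2.1
  obtain ⟨hη, hζ⟩ := (isChain_ggrho_iff hcol).1 hchain
  refine ⟨by simp, by simp [hlast, etaP_addPC hground], by simp [hlast, zetaP_addPC hground],
    List.forall_mem_map.2 fun a ha => pVal_etaP (hval a ha),
    List.forall_mem_map.2 fun a ha => pVal_zetaP (hval a ha), hη, hζ, ?_⟩
  intro j _ a b ha hb
  rw [List.getElem?_map] at ha hb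
  obtain ⟨c, hc, rfl⟩ := Option.map_eq_some_iff.1 ha
  rw [hc, Option.map_some, Option.some.injEq] at hb
  subst hb
  exact isFrobColumn_etaP_zetaP (hcol c (List.mem_of_getElem? hc))

theorem zipWith_addPC_mem_pRhoLast {m : ℕ} {kc ld : PCInt} {μ ν : List PCInt}
    (h : (μ, ν) ∈ FrobSet m kc ld) (hground : IsFrobColumn kc ld) :
    List.zipWith addPC μ ν ∈ PRhoLast m (addPC kc ld) := by
  have hF := forall₂_isFrobColumn_of_mem_frobSet h hground
  obtain ⟨hlen, hμ, hν, hvalμ, hvalν, hchainμ, hchainν, -⟩ := h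
  have hval : ∀ a ∈ List.zipWith addPC μ ν, SVal m a.2 := by
    rw [← List.map_uncurry_zip_eq_zipWith, List.forall_mem_map]
    rintro ⟨u, v⟩ huv
    exact sVal_addPC (hvalμ u (List.of_mem_zip huv).1) (hvalν v (List.of_mem_zip huv).2)
  refine ⟨List.getLast?_zipWith_of_length_eq hlen hμ hν, hval,
    (isChain_ggrho_iff fun a ha => (hval a ha).2.1).2 ?_⟩
  rw [map_etaP_zipWith_addPC hF, map_zetaP_zipWith_addPC hF]
  exact ⟨hchainμ, hchainν⟩

theorem fst_etaP_add_fst_zetaP (a : SCInt) : (etaP a).1 + (zetaP a).1 = a.1 := by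
  unfold etaP zetaP; split_ifs <;> omega

theorem colours_eq_snd_etaP_add_snd_zetaP (a : SCInt) :
    ({a.2.1, a.2.2} : Multiset ℤ) = {(etaP a).2} + {(zetaP a).2} := by
  unfold etaP zetaP
  split_ifs
  · exact Multiset.cons_swap _ _ _
  · rfl

theorem sum_fst_eq_sum_fst_etaP_add_sum_fst_zetaP (l : List SCInt) :
    (l.map Prod.fst).sum =
      ((l.map etaP).map Prod.fst).sum + ((l.map zetaP).map Prod.fst).sum := by
  simp only [List.map_map, ← List.sum_map_add]
  exact congrArg List.sum (List.map_congr_left fun a _ => (fst_etaP_add_fst_zetaP a).symm)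

theorem List.sum_map_singleton {α β : Type*} (f : α → β) (l : List α) :
    (l.map fun a => ({f a} : Multiset β)).sum = ((l.map f : List β) : Multiset β) := by
  induction l with
  | nil => rfl
  | cons a l ih => simp [ih, Multiset.singleton_add]

theorem sum_colours_eq_snd_etaP_add_snd_zetaP (l : List SCInt) :
    (l.map fun a => ({a.2.1, a.2.2} : Multiset ℤ)).sum =
      (((l.map etaP).map Prod.snd : List ℤ) : Multiset ℤ) +
        (((l.map zetaP).map Prod.snd : List ℤ) : Multiset ℤ) := by
  simp only [colours_eq_snd_etaP_add_snd_zetaP, List.sum_map_add, List.sum_map_singleton,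
    List.map_map, Function.comp_def]

theorem stmt_13_general (m : ℕ) (kc ld : PCInt)
    (hge : pge kc ld) (hle : pge (ld.1 + 1, ld.2) kc) :
    Set.BijOn (fun π : List SCInt => (π.map etaP, π.map zetaP))
      (PRhoLast m (addPC kc ld)) (FrobSet m kc ld) ∧
    ∀ π ∈ PRhoLast m (addPC kc ld),
      -- the size is preserved
      ((π.dropLast.map Prod.fst).sum =
        ((π.map etaP).dropLast.map Prod.fst).sum +
        ((π.map zetaP).dropLast.map Prod.fst).sum) ∧
      -- the colour sequence is preserved
      ((π.dropLast.map (fun a => ({a.2.1, a.2.2} : Multiset ℤ))).sum =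
        (((π.map etaP).dropLast.map Prod.snd : List ℤ) : Multiset ℤ) +
        (((π.map zetaP).dropLast.map Prod.snd : List ℤ) : Multiset ℤ)) := by
  have hground : IsFrobColumn kc ld := ⟨hge, hle⟩
  refine ⟨⟨fun π hπ => map_etaP_map_zetaP_mem_frobSet hπ hground, ?_, ?_⟩, fun π _ => ?_⟩
  · intro π hπ π' hπ' h
    obtain ⟨hη, hζ⟩ := Prod.mk.inj h
    rw [← zipWith_addPC_map_etaP_map_zetaP fun a ha => (hπ.2.1 a ha).2.1, hη, hζ,
      zipWith_addPC_map_etaP_map_zetaP fun a ha => (hπ'.2.1 a ha).2.1]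
  · rintro ⟨μ, ν⟩ hμν
    have hF := forall₂_isFrobColumn_of_mem_frobSet hμν hground
    exact ⟨_, zipWith_addPC_mem_pRhoLast hμν hground,
      Prod.ext (map_etaP_zipWith_addPC hF) (map_zetaP_zipWith_addPC hF)⟩
  · rw [← List.map_dropLast, ← List.map_dropLast]
    exact ⟨sum_fst_eq_sum_fst_etaP_add_sum_fst_zetaP _, sum_colours_eq_snd_etaP_add_snd_zetaP _⟩

/-- the map
`(π_0,…,π_{s-1}, k_c + l_d) ↦ ((η(π_0),…,η(π_{s-1}),k_c), (ζ(π_0),…,ζ(π_{s-1}),l_d))`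
is a bijection from `P^{k_c+l_d}_ρ` to `F^{k_c,l_d}_>` preserving size and colour
sequence. -/
theorem stmt_13 (m : ℕ) (hm : 1 ≤ m) (kc ld : PCInt)
    (hkc : PVal m kc.2) (hld : PVal m ld.2)
    (hge : pge kc ld) (hle : pge (ld.1 + 1, ld.2) kc) :
    Set.BijOn (fun π : List SCInt => (π.map etaP, π.map zetaP))
      (PRhoLast m (addPC kc ld)) (FrobSet m kc ld) ∧
    ∀ π ∈ PRhoLast m (addPC kc ld),
      -- the size is preserved
      ((π.dropLast.map Prod.fst).sum =
        ((π.map etaP).dropLast.map Prod.fst).sum +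
        ((π.map zetaP).dropLast.map Prod.fst).sum) ∧
      -- the colour sequence is preserved
      ((π.dropLast.map (fun a => ({a.2.1, a.2.2} : Multiset ℤ))).sum =
        (((π.map etaP).dropLast.map Prod.snd : List ℤ) : Multiset ℤ) +
        (((π.map zetaP).dropLast.map Prod.snd : List ℤ) : Multiset ℤ)) :=
  stmt_13_general m kc ld hge hle
end

section
/- Let (e_0,…,e_m) be a path in ℤ_S. Then: (1) the sequence (η(e_j))_{j=0}^m is non-decreasing and the sequence (ζ(e_j))_{j=0}^m is non-increasing with respect to the order ≥ on primary-coloured integers, and the sequence (e_j)_{j=0}^m is increasing with respect to the order ≥ on secondary-coloured integers; (2) for all u ∈ {0,…,m}, η(e_u) = succ^u(ζ(e_u)). -/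
open Classical

/-- The successor operator on primary-coloured integers: `succ(k_{c_u}) = k_{c_{u+1}}`
for `u < m` and `succ(k_{c_m}) = (k+1)_{c_1}`. -/
def succP (m : ℕ) (a : PCInt) : PCInt :=
  if a.2 = (m : ℤ) then (a.1 + 1, 1) else (a.1, a.2 + 1)

/-- `b = f(a)` or `b = d(a)`: either `η(b) = succ(η(a))` and `ζ(b) = ζ(a)`, or
`η(b) = η(a)` and `ζ(b) = succ⁻¹(ζ(a))`. -/
def stepRel (m : ℕ) (a b : SCInt) : Prop :=
  (etaP b = succP m (etaP a) ∧ zetaP b = zetaP a) ∨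
  (etaP b = etaP a ∧ succP m (zetaP b) = zetaP a)

/-- A path in `ℤ_S`: a sequence `(e_0,…,e_m)` of `m+1` secondary-coloured integers such
that each `e_{u+1}` is `f(e_u)` or `d(e_u)`. -/
def IsPath (m : ℕ) (e : ℕ → SCInt) : Prop :=
  (∀ j ≤ m, SVal m (e j).2) ∧ (∀ j < m, stepRel m (e j) (e (j + 1)))

/-- The order `≥` on `ℤ_S`: `k_c ≥ l_d` iff `η(k_c) > η(l_d)`, or `η(k_c) = η(l_d)` and
`ζ(k_c) ≤ ζ(l_d)`. -/
def sge (a b : SCInt) : Prop :=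
  pgt (etaP a) (etaP b) ∨ (etaP a = etaP b ∧ pge (zetaP b) (zetaP a))

/-- Distance from ζ to η in succ-steps. -/
def tval (m : ℕ) (a : SCInt) : ℤ :=
  if a.1 % 2 = 0 then a.2.2 - a.2.1 else (m : ℤ) - a.2.2 + a.2.1

lemma pge_refl (p : PCInt) : pge p p := by unfold pge; split_ifs <;> omega

lemma pge_succ (m : ℕ) (p : PCInt) : pge (succP m p) p := by
  unfold pge succP; split_ifs <;> simp <;> omega

lemma pgt_succ (m : ℕ) (p : PCInt) : pgt (succP m p) p := by
  unfold pgt succP; split_ifs <;> simp <;> omega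

lemma pge_trans (a b c : PCInt) (h1 : pge a b) (h2 : pge b c) : pge a c := by
  unfold pge at *; split_ifs at * <;> omega

lemma pgt_trans (a b c : PCInt) (h1 : pgt a b) (h2 : pgt b c) : pgt a c := by
  unfold pgt at *; split_ifs at * <;> omega

lemma sge_trans (a b c : SCInt) (h1 : sge a b) (h2 : sge b c) : sge a c := by
  rcases h1 with h1 | ⟨h1, h1'⟩ <;> rcases h2 with h2 | ⟨h2, h2'⟩
  · exact Or.inl (pgt_trans _ _ _ h1 h2)
  · exact Or.inl (h2 ▸ h1)
  · exact Or.inl (h1 ▸ h2)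
  · exact Or.inr ⟨h1.trans h2, pge_trans _ _ _ h2' h1'⟩

lemma step_sge (m : ℕ) (a b : SCInt) (h : stepRel m a b) : sge b a := by
  rcases h with ⟨h1, h2⟩ | ⟨h1, h2⟩
  · exact Or.inl (h1 ▸ pgt_succ m _)
  · exact Or.inr ⟨h1, h2 ▸ pge_succ m _⟩

lemma step_eta (m : ℕ) (a b : SCInt) (h : stepRel m a b) :
    pge (etaP b) (etaP a) := by
  rcases h with ⟨h1, h2⟩ | ⟨h1, h2⟩
  · exact h1 ▸ pge_succ m _
  · exact h1 ▸ pge_refl _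

lemma step_zeta (m : ℕ) (a b : SCInt) (h : stepRel m a b) :
    pge (zetaP a) (zetaP b) := by
  rcases h with ⟨h1, h2⟩ | ⟨h1, h2⟩
  · exact h2 ▸ pge_refl _
  · exact h2 ▸ pge_succ m _

lemma succ_iter (m : ℕ) : ∀ (j : ℕ) (k u : ℤ), 1 ≤ u → u ≤ m → u + j ≤ 2 * m →
    (succP m)^[j] (k, u) = if u + j ≤ m then (k, u + j) else (k + 1, u + j - m) := by
  intro j
  induction j with
  | zero => intro k u h1 h2 h3; rw [if_pos (by omega)]; simp
  | succ n ih =>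
    intro k u h1 h2 h3
    rw [Function.iterate_succ_apply]
    by_cases hum : u = (m : ℤ)
    · rw [show succP m (k, u) = ((k + 1 : ℤ), (1 : ℤ)) from by simp [succP, hum]]
      rw [ih (k + 1) 1 (by omega) (by omega) (by omega)]
      split_ifs <;> simp [Prod.ext_iff] <;> omega
    · rw [show succP m (k, u) = (k, u + 1) from by simp [succP, hum]]
      rw [ih k (u + 1) (by omega) (by omega) (by omega)]
      split_ifs <;> simp [Prod.ext_iff] <;> omega

lemma eta_eq_iter (m : ℕ) (hm : 1 ≤ m) (a : SCInt) (ha : SVal m a.2) :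
    0 ≤ tval m a ∧ tval m a ≤ m ∧ etaP a = (succP m)^[(tval m a).toNat] (zetaP a) := by
  obtain ⟨hx, hxy, hy⟩ := ha
  refine ⟨?_, ?_, ?_⟩
  · unfold tval; split_ifs <;> omega
  · unfold tval; split_ifs <;> omega
  · unfold tval etaP zetaP
    split_ifs with h
    · rw [succ_iter m _ _ _ hx (by omega) (by omega)]
      rw [if_pos (by omega)]
      simp [Prod.ext_iff]; omega
    · rw [succ_iter m _ _ _ (by omega : (1:ℤ) ≤ a.2.2) (by omega) (by omega)]
      rw [if_neg (by omega)]
      simp [Prod.ext_iff]; omega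

lemma step_tval (m : ℕ) (a b : SCInt) (ha : SVal m a.2) (hb : SVal m b.2)
    (h : stepRel m a b) : tval m b = tval m a + 1 := by
  obtain ⟨a1, ax, ay⟩ := a
  obtain ⟨b1, bx, by'⟩ := b
  obtain ⟨hx, hxy, hy⟩ := ha
  obtain ⟨hx', hxy', hy'⟩ := hb
  simp only [tval]
  rcases h with ⟨h1, h2⟩ | ⟨h1, h2⟩ <;>
    simp only [etaP, zetaP, succP] at h1 h2 <;>
    split_ifs at h1 h2 ⊢ <;>
    dsimp only at * <;>
    simp only [Prod.mk.injEq] at h1 h2 <;>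
    omega
/-- along a path `(e_0,…,e_m)` in `ℤ_S`, the sequence `(η(e_j))` is
non-decreasing, the sequence `(ζ(e_j))` is non-increasing, the sequence `(e_j)` is
(strictly) increasing for the order `≥` on `ℤ_S`, and `η(e_u) = succ^u(ζ(e_u))` for all
`u ∈ {0,…,m}`. -/
theorem stmt_16 (m : ℕ) (hm : 1 ≤ m) (e : ℕ → SCInt) (he : IsPath m e) :
    (∀ u v : ℕ, u ≤ v → v ≤ m → pge (etaP (e v)) (etaP (e u))) ∧
    (∀ u v : ℕ, u ≤ v → v ≤ m → pge (zetaP (e u)) (zetaP (e v))) ∧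
    (∀ u v : ℕ, u < v → v ≤ m → sge (e v) (e u) ∧ e v ≠ e u) ∧
    (∀ u : ℕ, u ≤ m → etaP (e u) = (succP m)^[u] (zetaP (e u))) := by
  obtain ⟨hval, hstep⟩ := he
  have htv : ∀ j ≤ m, tval m (e j) = tval m (e 0) + j := by
    intro j hj
    induction j with
    | zero => simp
    | succ n ih =>
      rw [step_tval m (e n) (e (n + 1)) (hval n (by omega)) (hval (n + 1) hj)
        (hstep n (by omega)), ih (by omega)]
      push_cast; ring
  have h0 : tval m (e 0) = 0 := by
    have b0 := (eta_eq_iter m hm (e 0) (hval 0 (by omega))).1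
    have bm := (eta_eq_iter m hm (e m) (hval m le_rfl)).2.1
    have hmm := htv m le_rfl
    omega
  have htv' : ∀ j ≤ m, tval m (e j) = j := by
    intro j hj; rw [htv j hj, h0, zero_add]
  refine ⟨?_, ?_, ?_, ?_⟩
  · intro u v huv hv
    induction v, huv using Nat.le_induction with
    | base => exact pge_refl _
    | succ n hn ih =>
      exact pge_trans _ _ _ (step_eta m _ _ (hstep n (by omega))) (ih (by omega))
  · intro u v huv hv
    induction v, huv using Nat.le_induction with
    | base => exact pge_refl _
    | succ n hn ih =>
      exact pge_trans _ _ _ (ih (by omega)) (step_zeta m _ _ (hstep n (by omega)))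
  · intro u v huv hv
    constructor
    · induction v, huv using Nat.le_induction with
      | base => exact step_sge m _ _ (hstep u (by omega))
      | succ n hn ih =>
        exact sge_trans _ _ _ (step_sge m _ _ (hstep n (by omega))) (ih (by omega))
    · intro hequ
      have h1 := htv' u (by omega)
      have h2 := htv' v hv
      rw [hequ] at h2
      omega
  · intro u hu
    have h := (eta_eq_iter m hm (e u) (hval u hu)).2.2
    rw [htv' u hu] at h
    simpa using h
end

section
/- For all secondary-coloured integers k_c ≥ l_d (with respect to the order ≥ on ℤ_S), one has k_c ≫_ρ l_d if and only if there is no path in ℤ_S which contains both k_c and l_d. -/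
open Classical

/-- Linearization of a primary-coloured integer. -/
def NP (m : ℕ) (p : PCInt) : ℤ := p.1 * m + p.2 - 1

lemma mul_small (m : ℕ) (hm : 1 ≤ m) (A c : ℤ) (h : A * (m:ℤ) = c)
    (h1 : -(m:ℤ) < c) (h2 : c < (m:ℤ)) : A = 0 ∧ c = 0 := by
  have hm' : (1:ℤ) ≤ m := by exact_mod_cast hm
  rcases lt_trichotomy A 0 with h3 | h3 | h3
  · nlinarith
  · constructor; omega; nlinarith
  · nlinarith

lemma NP_succ (m : ℕ) (p : PCInt) : NP m (succP m p) = NP m p + 1 := by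
  unfold NP succP
  split_ifs with h
  · simp [h]; ring
  · simp; ring

lemma NP_inj (m : ℕ) (hm : 1 ≤ m) (p q : PCInt) (hp : PVal m p.2) (hq : PVal m q.2)
    (h : NP m p = NP m q) : p = q := by
  obtain ⟨hp1, hp2⟩ := hp; obtain ⟨hq1, hq2⟩ := hq
  unfold NP at h
  have h' : (p.1 - q.1) * m = q.2 - p.2 := by ring_nf; linarith
  obtain ⟨h1, h2⟩ := mul_small m hm _ _ h' (by omega) (by omega)
  have : p.1 = q.1 := by omega
  exact Prod.ext this (by omega)

lemma pgt_iff (m : ℕ) (hm : 1 ≤ m) (p q : PCInt) (hp : PVal m p.2) (hq : PVal m q.2) :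
    pgt p q ↔ NP m p > NP m q := by
  obtain ⟨hp1, hp2⟩ := hp; obtain ⟨hq1, hq2⟩ := hq
  have hm' : (1:ℤ) ≤ m := by exact_mod_cast hm
  unfold pgt NP
  have key : p.1 * m + p.2 > q.1 * m + q.2 ↔ (p.1 > q.1 ∨ (p.1 = q.1 ∧ p.2 > q.2)) := by
    constructor
    · intro h
      rcases lt_trichotomy p.1 q.1 with h3 | h3 | h3
      · nlinarith
      · right; exact ⟨h3, by nlinarith⟩
      · left; exact h3
    · rintro (h | ⟨h1, h2⟩)
      · nlinarith
      · nlinarith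
  split_ifs with h <;> omega

lemma PVal_eta (m : ℕ) (a : SCInt) (ha : SVal m a.2) : PVal m (etaP a).2 := by
  obtain ⟨h1, h2, h3⟩ := ha
  unfold etaP PVal; split_ifs <;> simp <;> omega

lemma PVal_zeta (m : ℕ) (a : SCInt) (ha : SVal m a.2) : PVal m (zetaP a).2 := by
  obtain ⟨h1, h2, h3⟩ := ha
  unfold zetaP PVal; split_ifs <;> simp <;> omega

lemma band (m : ℕ) (a : SCInt) (ha : SVal m a.2) :
    0 ≤ NP m (etaP a) - NP m (zetaP a) ∧ NP m (etaP a) - NP m (zetaP a) ≤ m := by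
  obtain ⟨h1, h2, h3⟩ := ha
  unfold NP etaP zetaP
  split_ifs with h <;> simp <;> constructor <;> nlinarith [sq_nonneg (a.1:ℤ)]

/-- Injectivity of `a ↦ (NP (etaP a), NP (zetaP a))` on valid secondary integers. -/
lemma sc_inj (m : ℕ) (hm : 1 ≤ m) (a b : SCInt) (ha : SVal m a.2) (hb : SVal m b.2)
    (h1 : NP m (etaP a) = NP m (etaP b)) (h2 : NP m (zetaP a) = NP m (zetaP b)) : a = b := by
  have hm' : (1:ℤ) ≤ m := by exact_mod_cast hm
  obtain ⟨ha1, ha2, ha3⟩ := ha; obtain ⟨hb1, hb2, hb3⟩ := hb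
  simp only [NP, etaP, zetaP] at h1 h2
  split_ifs at h1 h2 with hpa hpb hpb
  · -- even even
    simp at h1 h2
    have e1 : (a.1/2 - b.1/2) * m = b.2.2 - a.2.2 := by linear_combination h1
    have e2 : (a.1/2 - b.1/2) * m = b.2.1 - a.2.1 := by linear_combination h2
    obtain ⟨f1, f2⟩ := mul_small m hm _ _ e1 (by omega) (by omega)
    obtain ⟨f3, f4⟩ := mul_small m hm _ _ e2 (by omega) (by omega)
    have : a.1 = b.1 := by omega
    exact Prod.ext this (Prod.ext (by omega) (by omega))
  · -- a even, b odd
    exfalso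
    simp at h1 h2
    have e1 : (a.1/2 - (b.1-1)/2 - 1) * m = b.2.1 - a.2.2 := by linear_combination h1
    have e2 : (a.1/2 - (b.1-1)/2) * m = b.2.2 - a.2.1 := by linear_combination h2
    obtain ⟨f1, f2⟩ := mul_small m hm _ _ e1 (by omega) (by omega)
    have : (1:ℤ) * m = b.2.2 - a.2.1 := by linear_combination e2 - (m:ℤ) * f1
    omega
  · -- a odd, b even
    exfalso
    simp at h1 h2
    have e1 : (b.1/2 - (a.1-1)/2 - 1) * m = a.2.1 - b.2.2 := by linear_combination -h1
    have e2 : (b.1/2 - (a.1-1)/2) * m = a.2.2 - b.2.1 := by linear_combination -h2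
    obtain ⟨f1, f2⟩ := mul_small m hm _ _ e1 (by omega) (by omega)
    have : (1:ℤ) * m = a.2.2 - b.2.1 := by linear_combination e2 - (m:ℤ) * f1
    omega
  · -- odd odd
    simp at h1 h2
    have e1 : ((a.1-1)/2 - (b.1-1)/2) * m = b.2.1 - a.2.1 := by linear_combination h1
    have e2 : ((a.1-1)/2 - (b.1-1)/2) * m = b.2.2 - a.2.2 := by linear_combination h2
    obtain ⟨f1, f2⟩ := mul_small m hm _ _ e1 (by omega) (by omega)
    obtain ⟨f3, f4⟩ := mul_small m hm _ _ e2 (by omega) (by omega)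
    have : a.1 = b.1 := by omega
    exact Prod.ext this (Prod.ext (by omega) (by omega))

lemma mul_small01 (m : ℕ) (hm : 1 ≤ m) (A c : ℤ) (h : A * (m:ℤ) = c)
    (h1 : -(m:ℤ) < c) (h2 : c < 2 * (m:ℤ)) : A = 0 ∨ A = 1 := by
  have hm' : (1:ℤ) ≤ m := by exact_mod_cast hm
  rcases lt_trichotomy A 0 with h3 | h3 | h3
  · nlinarith
  · left; exact h3
  · rcases lt_trichotomy A 1 with h4 | h4 | h4
    · omega
    · right; exact h4
    · nlinarith

lemma pge_iff (m : ℕ) (hm : 1 ≤ m) (p q : PCInt) (hp : PVal m p.2) (hq : PVal m q.2) :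
    pge p q ↔ NP m p ≥ NP m q := by
  obtain ⟨hp1, hp2⟩ := hp; obtain ⟨hq1, hq2⟩ := hq
  have hm' : (1:ℤ) ≤ m := by exact_mod_cast hm
  unfold pge NP
  have key : p.1 * m + p.2 ≥ q.1 * m + q.2 ↔ (p.1 > q.1 ∨ (p.1 = q.1 ∧ p.2 ≥ q.2)) := by
    constructor
    · intro h
      rcases lt_trichotomy p.1 q.1 with h3 | h3 | h3
      · nlinarith
      · right; exact ⟨h3, by nlinarith⟩
      · left; exact h3
    · rintro (h | ⟨h1, h2⟩)
      · nlinarith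
      · nlinarith
  split_ifs with h <;> omega

lemma PVal_succ (m : ℕ) (p : PCInt) (hp : PVal m p.2) : PVal m (succP m p).2 := by
  obtain ⟨h1, h2⟩ := hp
  unfold succP PVal; split_ifs <;> simp <;> omega

/-- Inverse of `a ↦ (NP (etaP a), NP (zetaP a))`. -/
def scOf (m : ℕ) (P Q : ℤ) : SCInt :=
  if P / m = Q / m then (2 * (P / m), (Q % m + 1, P % m + 1))
  else (2 * (Q / m) + 1, (P % m + 1, Q % m + 1))

lemma scOf_spec (m : ℕ) (hm : 1 ≤ m) (P Q : ℤ) (h0 : 0 ≤ P - Q) (h1 : P - Q ≤ m) :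
    SVal m (scOf m P Q).2 ∧ NP m (etaP (scOf m P Q)) = P ∧ NP m (zetaP (scOf m P Q)) = Q := by
  have hm0 : (0:ℤ) < m := by exact_mod_cast hm
  have hPd : (m:ℤ) * (P / m) + P % m = P := Int.mul_ediv_add_emod P m
  have hQd : (m:ℤ) * (Q / m) + Q % m = Q := Int.mul_ediv_add_emod Q m
  have hPr : 0 ≤ P % m := Int.emod_nonneg P (by omega)
  have hPr' : P % m < m := Int.emod_lt_of_pos P hm0
  have hQr : 0 ≤ Q % m := Int.emod_nonneg Q (by omega)
  have hQr' : Q % m < m := Int.emod_lt_of_pos Q hm0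
  unfold scOf
  split_ifs with hbc
  · -- same block
    have hrs : P % m - Q % m = P - Q := by linear_combination hPd - hQd - (m:ℤ) * hbc
    have he : etaP (2 * (P / m), (Q % m + 1, P % m + 1)) = (P / m, P % m + 1) := by
      simp [etaP]
    have hz : zetaP (2 * (P / m), (Q % m + 1, P % m + 1)) = (P / m, Q % m + 1) := by
      simp [zetaP]
    refine ⟨⟨by simp; omega, by simp; omega, by simp; omega⟩, ?_, ?_⟩
    · rw [he]; simp only [NP]; linear_combination hPd
    · rw [hz]; simp only [NP]; linear_combination hQd + (m:ℤ) * hbc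
  · -- different blocks
    have key : (P / m - Q / m) * m = (P - Q) - (P % m - Q % m) := by
      linear_combination hPd - hQd
    have hb1 : P / m = Q / m + 1 := by
      rcases mul_small01 m hm _ _ key (by omega) (by omega) with h | h
      · omega
      · omega
    have hrs : P % m - Q % m = (P - Q) - m := by
      linear_combination key - (m:ℤ) * hb1
    have he : etaP (2 * (Q / m) + 1, (P % m + 1, Q % m + 1)) = (Q / m + 1, P % m + 1) := by
      simp [etaP]
    have hz : zetaP (2 * (Q / m) + 1, (P % m + 1, Q % m + 1)) = (Q / m, Q % m + 1) := by
      simp [zetaP]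
    refine ⟨⟨by simp; omega, by simp; omega, by simp; omega⟩, ?_, ?_⟩
    · rw [he]; simp only [NP]; linear_combination hPd - (m:ℤ) * hb1
    · rw [hz]; simp only [NP]; linear_combination hQd

lemma step_N (m : ℕ) (a b : SCInt) (h : stepRel m a b) :
    (NP m (etaP b) = NP m (etaP a) + 1 ∧ NP m (zetaP b) = NP m (zetaP a)) ∨
    (NP m (etaP b) = NP m (etaP a) ∧ NP m (zetaP b) = NP m (zetaP a) - 1) := by
  rcases h with ⟨h1, h2⟩ | ⟨h1, h2⟩
  · left; rw [h1, NP_succ, h2]; exact ⟨rfl, rfl⟩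
  · right
    have := NP_succ m (zetaP b)
    rw [h2] at this
    rw [h1]
    omega

lemma path_mono (m : ℕ) (e : ℕ → SCInt) (hstep : ∀ j < m, stepRel m (e j) (e (j + 1))) :
    ∀ u v : ℕ, u ≤ v → v ≤ m →
      NP m (etaP (e u)) ≤ NP m (etaP (e v)) ∧ NP m (zetaP (e v)) ≤ NP m (zetaP (e u)) := by
  intro u v huv hvm
  induction v, huv using Nat.le_induction with
  | base => exact ⟨le_refl _, le_refl _⟩
  | succ v hv ih =>
    have h1 := ih (by omega)
    have h2 := step_N m (e v) (e (v + 1)) (hstep v (by omega))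
    omega

theorem lemA (m : ℕ) (a b : SCInt) (ha : SVal m a.2) (hb : SVal m b.2) (hab : sge a b) :
    ggrho a b ↔ pgt (etaP a) (etaP b) ∧ pgt (zetaP a) (zetaP b) := by
  simp only [ggrho, rho, chi, pgt, pge, etaP, zetaP, sge, SVal, Prod.mk.injEq] at *
  split_ifs at * <;> omega

/-- for secondary-coloured integers `k_c ≥ l_d`, one has `k_c ≫_ρ l_d`
iff no path in `ℤ_S` contains both `k_c` and `l_d`. -/
theorem stmt_17 (m : ℕ) (hm : 1 ≤ m) (a b : SCInt)
    (ha : SVal m a.2) (hb : SVal m b.2) (hab : sge a b) :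
    ggrho a b ↔
      ¬ ∃ e : ℕ → SCInt, IsPath m e ∧ ∃ u ≤ m, ∃ v ≤ m, e u = a ∧ e v = b := by
  have hpa := PVal_eta m a ha
  have hza := PVal_zeta m a ha
  have hpb := PVal_eta m b hb
  have hzb := PVal_zeta m b hb
  rw [lemA m a b ha hb hab]
  constructor
  · rintro ⟨h1, h2⟩ ⟨e, ⟨hval, hstep⟩, u, hu, v, hv, heu, hev⟩
    rw [pgt_iff m hm _ _ hpa hpb] at h1
    rw [pgt_iff m hm _ _ hza hzb] at h2
    rcases le_total u v with huv | hvu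
    · have := (path_mono m e hstep u v huv hv).1
      rw [heu, hev] at this; omega
    · have := (path_mono m e hstep v u hvu hu).2
      rw [heu, hev] at this; omega
  · intro h
    by_contra hcon
    apply h
    have hPQ : NP m (etaP a) ≥ NP m (etaP b) ∧ NP m (zetaP a) ≤ NP m (zetaP b) := by
      rcases hab with h1 | ⟨h1, h2⟩
      · have h1' := (pgt_iff m hm _ _ hpa hpb).1 h1
        have h2 : ¬ pgt (zetaP a) (zetaP b) := fun hz => hcon ⟨h1, hz⟩
        rw [pgt_iff m hm _ _ hza hzb] at h2
        omega
      · have h2' := (pge_iff m hm _ _ hzb hza).1 h2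
        rw [h1]
        exact ⟨le_refl _, h2'⟩
    obtain ⟨hP, hQ⟩ := hPQ
    obtain ⟨hba1, hba2⟩ := band m a ha
    obtain ⟨hbb1, hbb2⟩ := band m b hb
    set Pa := NP m (etaP a) with hPadef
    set Qa := NP m (zetaP a) with hQadef
    set Pb := NP m (etaP b) with hPbdef
    set Qb := NP m (zetaP b) with hQbdef
    set Qf : ℕ → ℤ := fun j => max Qa (min Qb (Pa - j)) with hQf
    refine ⟨fun j => scOf m (Qf j + j) (Qf j), ⟨?_, ?_⟩,
      (Pa - Qa).toNat, by omega, (Pb - Qb).toNat, by omega, ?_, ?_⟩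
    · intro j hj
      exact (scOf_spec m hm (Qf j + j) (Qf j) (by omega) (by omega)).1
    · intro j hj
      obtain ⟨sv1, e1, z1⟩ := scOf_spec m hm (Qf j + j) (Qf j) (by omega) (by omega)
      obtain ⟨sv2, e2, z2⟩ := scOf_spec m hm (Qf (j+1) + (j+1 : ℕ)) (Qf (j+1))
        (by omega) (by push_cast; omega)
      have hQcase : Qf (j+1) = Qf j ∨ Qf (j+1) = Qf j - 1 := by
        simp only [hQf]; push_cast; omega
      rcases hQcase with hc | hc
      · left
        constructor
        · apply NP_inj m hm _ _ (PVal_eta m _ sv2) (PVal_succ m _ (PVal_eta m _ sv1))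
          rw [NP_succ, e2, e1]
          push_cast; omega
        · apply NP_inj m hm _ _ (PVal_zeta m _ sv2) (PVal_zeta m _ sv1)
          rw [z2, z1, hc]
      · right
        constructor
        · apply NP_inj m hm _ _ (PVal_eta m _ sv2) (PVal_eta m _ sv1)
          rw [e2, e1]
          push_cast; omega
        · apply NP_inj m hm _ _ (PVal_succ m _ (PVal_zeta m _ sv2)) (PVal_zeta m _ sv1)
          rw [NP_succ, z2, z1]
          omega
    · -- e u = a
      obtain ⟨sv, he, hz⟩ := scOf_spec m hm (Qf (Pa - Qa).toNat + ((Pa - Qa).toNat : ℕ))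
        (Qf (Pa - Qa).toNat) (by omega) (by omega)
      apply sc_inj m hm _ a sv ha
      · rw [he]; simp only [hQf]; omega
      · rw [hz]; simp only [hQf]; omega
    · -- e v = b
      obtain ⟨sv, he, hz⟩ := scOf_spec m hm (Qf (Pb - Qb).toNat + ((Pb - Qb).toNat : ℕ))
        (Qf (Pb - Qb).toNat) (by omega) (by omega)
      apply sc_inj m hm _ b sv hb
      · rw [he]; simp only [hQf]; omega
      · rw [hz]; simp only [hQf]; omega
end
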